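/- arXiv:1712.07638 — 11 statements merged into one kernel-verified Lean document; each statement's English description precedes it below -/
import Mathlib

section
/- Let X be a Banach space and F a finite-dimensional linear subspace of the bidual X** such that X ∩ F = {0} (identifying X with its canonical image in X**). Then for every δ > 0 and every x ∈ X with ‖x‖ = 1, there exists x* ∈ X* with ‖x*‖ ≤ 1 + δ such that x*(x) ≥ d(S_X, F) and x**(x*) = 0 for every x** ∈ F. -/
/-!
Hahn–Banach on `X** ⧸ F` gives `Φ ∈ X***` of norm at most one that vanishes on `F` and takes the
value `dist(x, F) ≥ d(S_X, F)` at `x`. By Helly's lemma, on the finite-dimensional space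
`F + ℝ x` the functional `Φ` is evaluation at some `f ∈ X*` with `‖f‖ ≤ 1 + δ`: the restrictions
of the unit ball of `X*` are dense in the unit ball of `(F + ℝ x)*` (separate a point from them and
use reflexivity of finite-dimensional spaces), and in finite dimension a convex set that is dense
in a ball contains the open ball.
-/

open NormedSpace Metric

theorem Convex.interior_closure_eq_interior_of_finiteDimensional {V : Type*}
    [NormedAddCommGroup V] [NormedSpace ℝ V] [FiniteDimensional ℝ V] {s : Set V}
    (hs : Convex ℝ s) : interior (closure s) = interior s := by
  rcases (interior (closure s)).eq_empty_or_nonempty with h | h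
  · rw [h, eq_comm, ← Set.subset_empty_iff, ← h]
    exact interior_mono subset_closure
  refine hs.interior_closure_eq_interior_of_nonempty_interior ?_
  have hspan :=
    affineSpan_eq_top_of_nonempty_interior (h.mono (interior_mono (subset_convexHull ℝ _)))
  rw [hs.interior_nonempty_iff_affineSpan_eq_top, eq_top_iff, ← hspan, affineSpan_le]
  exact closure_minimal (subset_affineSpan ℝ s) (affineSpan ℝ s).closed_of_finiteDimensional

theorem NormedSpace.inclusionInDoubleDual_surjective {𝕜 V : Type*} [NontriviallyNormedField 𝕜]
    [CompleteSpace 𝕜] [NormedAddCommGroup V] [NormedSpace 𝕜 V] [FiniteDimensional 𝕜 V] :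
    Function.Surjective (inclusionInDoubleDual 𝕜 V) := by
  intro ξ
  obtain ⟨v, hv⟩ := (Module.evalEquiv 𝕜 V).surjective
    (ξ.toLinearMap ∘ₗ (LinearMap.toContinuousLinearMap : Module.Dual 𝕜 V ≃ₗ[𝕜] _).toLinearMap)
  exact ⟨v, ContinuousLinearMap.ext fun χ => LinearMap.congr_fun hv χ.toLinearMap⟩

section Restriction

variable {E G : Type*} [NormedAddCommGroup E] [NormedSpace ℝ E]
  [NormedAddCommGroup G] [NormedSpace ℝ G]
  (ι : G →ₗᵢ[ℝ] StrongDual ℝ E)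

theorem LinearIsometry.convex_image_flip_closedBall :
    Convex ℝ (ι.toContinuousLinearMap.flip '' closedBall (0 : E) 1) :=
  (convex_closedBall 0 1).linear_image ι.toContinuousLinearMap.flip.toLinearMap

theorem LinearIsometry.closedBall_subset_closure_image_flip [FiniteDimensional ℝ G] :
    closedBall (0 : StrongDual ℝ G) 1 ⊆
      closure (ι.toContinuousLinearMap.flip '' closedBall 0 1) := by
  intro ψ hψ
  by_contra hψC
  obtain ⟨ξ, u, hξC, huψ⟩ :=
    geometric_hahn_banach_closed_point ι.convex_image_flip_closedBall.closure isClosed_closure hψC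
  obtain ⟨g, rfl⟩ := inclusionInDoubleDual_surjective ξ
  have hlt : ∀ e ∈ closedBall (0 : E) 1, ι g e < u :=
    fun e he => hξC _ (subset_closure ⟨e, he, rfl⟩)
  have hu : 0 < u := by simpa using hlt 0 (mem_closedBall_self zero_le_one)
  have hg : ‖g‖ ≤ u := by
    rw [← ι.norm_map]
    refine ContinuousLinearMap.opNorm_le_of_unit_norm hu.le fun e he => abs_le.2 ⟨?_, ?_⟩
    · have := hlt (-e) (by simp [he])
      rw [map_neg] at this
      linarith
    · exact (hlt e (by simp [he])).le
  have hψg : ψ g ≤ ‖g‖ := by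
    calc ψ g ≤ ‖ψ‖ * ‖g‖ := (le_abs_self _).trans (ψ.le_opNorm g)
      _ ≤ ‖g‖ := mul_le_of_le_one_left (norm_nonneg g) (mem_closedBall_zero_iff.1 hψ)
  exact (huψ.trans_le (hψg.trans hg)).false

theorem LinearIsometry.exists_norm_le_flip_eq [FiniteDimensional ℝ G] {ψ : StrongDual ℝ G}
    {c : ℝ} (hψ : ‖ψ‖ < c) : ∃ e : E, ‖e‖ ≤ c ∧ ι.toContinuousLinearMap.flip e = ψ := by
  have hc : 0 < c := (norm_nonneg ψ).trans_lt hψ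
  have hball : ball (0 : StrongDual ℝ G) 1 ⊆ ι.toContinuousLinearMap.flip '' closedBall 0 1 :=
    calc ball 0 1 ⊆ interior (closedBall 0 1) :=
          interior_maximal ball_subset_closedBall isOpen_ball
      _ ⊆ interior (closure _) := interior_mono ι.closedBall_subset_closure_image_flip
      _ = interior _ :=
        ι.convex_image_flip_closedBall.interior_closure_eq_interior_of_finiteDimensional
      _ ⊆ _ := interior_subset
  obtain ⟨e, he, heψ⟩ := hball (show c⁻¹ • ψ ∈ ball 0 1 by
    rw [mem_ball_zero_iff, norm_smul, norm_inv, Real.norm_of_nonneg hc.le]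
    exact (inv_mul_lt_one₀ hc).2 hψ)
  refine ⟨c • e, ?_, ?_⟩
  · rw [norm_smul, Real.norm_of_nonneg hc.le]
    exact mul_le_of_le_one_right hc.le (mem_closedBall_zero_iff.1 he)
  · rw [map_smul, heψ, smul_inv_smul₀ hc.ne']

theorem LinearIsometry.exists_norm_le_forall_apply_eq [FiniteDimensional ℝ G]
    {Φ : StrongDual ℝ (StrongDual ℝ E)} {c : ℝ} (hΦ : ‖Φ‖ < c) :
    ∃ e : E, ‖e‖ ≤ c ∧ ∀ g, ι g e = Φ (ι g) := by
  have hΦι : ‖Φ.comp ι.toContinuousLinearMap‖ < c :=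
    calc _ ≤ ‖Φ‖ * ‖ι.toContinuousLinearMap‖ := Φ.opNorm_comp_le _
      _ ≤ ‖Φ‖ := mul_le_of_le_one_right (norm_nonneg Φ) ι.norm_toContinuousLinearMap_le
      _ < c := hΦ
  obtain ⟨e, he, heΦ⟩ := ι.exists_norm_le_flip_eq hΦι
  exact ⟨e, he, fun g => congr($heΦ g)⟩

end Restriction

theorem Submodule.exists_strongDual_norm_le_apply_eq_infDist {V : Type*}
    [SeminormedAddCommGroup V] [NormedSpace ℝ V] (F : Submodule ℝ V) (w : V) :
    ∃ Φ : StrongDual ℝ V, ‖Φ‖ ≤ 1 ∧ Φ w = infDist w F ∧ ∀ v ∈ F, Φ v = 0 := by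
  obtain ⟨g, hg, hgw⟩ := exists_dual_vector'' ℝ (F.mkQ w)
  refine ⟨g.comp F.mkQL, ?_, ?_, fun v hv => ?_⟩
  · refine ContinuousLinearMap.opNorm_le_bound _ zero_le_one fun v => ?_
    calc ‖g (F.mkQ v)‖ ≤ ‖g‖ * ‖F.mkQ v‖ := g.le_opNorm _
      _ ≤ 1 * ‖v‖ := mul_le_mul hg (Quotient.norm_mk_le F v) (norm_nonneg _) zero_le_one
  · exact hgw.trans (QuotientAddGroup.norm_mk (S := F.toAddSubgroup) w)
  · simp [(Quotient.mk_eq_zero F).2 hv]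

theorem Submodule.exists_norm_le_apply_eq_infDist {E : Type*} [NormedAddCommGroup E]
    [NormedSpace ℝ E] (F : Submodule ℝ (StrongDual ℝ E))
    [FiniteDimensional ℝ F] (w : StrongDual ℝ E) {c : ℝ} (hc : 1 < c) :
    ∃ e : E, ‖e‖ ≤ c ∧ w e = infDist w F ∧ ∀ v ∈ F, v e = 0 := by
  obtain ⟨Φ, hΦ, hΦw, hΦF⟩ := F.exists_strongDual_norm_le_apply_eq_infDist w
  obtain ⟨e, he, heΦ⟩ := LinearIsometry.exists_norm_le_forall_apply_eq (G := ↥(F ⊔ ℝ ∙ w))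
    (Submodule.subtypeₗᵢ _) (hΦ.trans_lt hc)
  exact ⟨e, he, (heΦ ⟨w, mem_sup_right (mem_span_singleton_self w)⟩).trans hΦw,
    fun v hv => (heΦ ⟨v, mem_sup_left hv⟩).trans (hΦF v hv)⟩

theorem statement1_general {X : Type*} [NormedAddCommGroup X] [NormedSpace ℝ X]
    (F : Submodule ℝ (StrongDual ℝ (StrongDual ℝ X)))
    (hFfin : Module.Finite ℝ F)
    (δ : ℝ) (hδ : 0 < δ) (x : X) (hx : ‖x‖ = 1) :
    ∃ f : StrongDual ℝ X, ‖f‖ ≤ 1 + δ ∧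
      sInf {r : ℝ | ∃ (y : X) (v : StrongDual ℝ (StrongDual ℝ X)),
        ‖y‖ = 1 ∧ v ∈ F ∧ r = ‖NormedSpace.inclusionInDoubleDual ℝ X y - v‖} ≤ f x ∧
      ∀ v ∈ F, v f = 0 := by
  obtain ⟨f, hf, hfx, hfF⟩ :=
    F.exists_norm_le_apply_eq_infDist (inclusionInDoubleDual ℝ X x) (lt_add_of_pos_right 1 hδ)
  refine ⟨f, hf, ?_, hfF⟩
  rw [← dual_def, hfx]
  refine (le_infDist ⟨0, F.zero_mem⟩).2 fun v hv =>
    csInf_le ⟨0, ?_⟩ ⟨x, v, hx, hv, dist_eq_norm (inclusionInDoubleDual ℝ X x) v⟩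
  rintro _ ⟨y, w, -, -, rfl⟩
  exact norm_nonneg (inclusionInDoubleDual ℝ X y - w)

/-- If `F` is a finite-dimensional subspace of the bidual `X**` with
`X ∩ F = {0}`, then for every `δ > 0` and every `x ∈ X` of norm one there is
`x* ∈ X*` with `‖x*‖ ≤ 1 + δ`, `x*(x) ≥ d(S_X, F)` and `x**(x*) = 0` for all `x** ∈ F`. -/
theorem statement1 {X : Type*} [NormedAddCommGroup X] [NormedSpace ℝ X] [CompleteSpace X]
    (F : Submodule ℝ (StrongDual ℝ (StrongDual ℝ X)))
    (hFfin : Module.Finite ℝ F)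
    (hXF : ∀ x : X, NormedSpace.inclusionInDoubleDual ℝ X x ∈ F → x = 0)
    (δ : ℝ) (hδ : 0 < δ) (x : X) (hx : ‖x‖ = 1) :
    ∃ f : StrongDual ℝ X, ‖f‖ ≤ 1 + δ ∧
      sInf {r : ℝ | ∃ (y : X) (v : StrongDual ℝ (StrongDual ℝ X)),
        ‖y‖ = 1 ∧ v ∈ F ∧ r = ‖NormedSpace.inclusionInDoubleDual ℝ X y - v‖} ≤ f x ∧
      ∀ v ∈ F, v f = 0 :=
  statement1_general F hFfin δ hδ x hx
end

section
/- Let X be a separable Banach space and let, for each 1 ≤ i ≤ l, T_i : ℓ₁ → X be an isomorphic embedding. Then for every i there exists an uncountable subset A_i of the Stone–Čech compactification βℕ such that the family {Q T_i** δ_p : p ∈ A_i} is linearly independent in X**/X, where Q : X** → X**/X is the quotient map and δ_p is the Dirac measure at p viewed as an element of ℓ₁** ≅ M(βℕ). -/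
/-!
Distinct ultrafilters `p ≠ q` are separated by a set `S ∈ p \ q`; the indicator of `S` is a
norm-one functional on `ℓ₁`, which extends through the embedding `T` by Hahn–Banach, so
`‖T** δ_p - T** δ_q‖ ≥ c` whenever `c‖y‖ ≤ ‖T y‖`. Take a maximal family of `p` for which
the classes `Q T** δ_p` are linearly independent. If it were countable, every `T** δ_p` would
lie in the span of countably many of them plus `X`, a separable set; a `c`-separated family
in a separable set is countable, but `βℕ` is not.
-/

open Filter Set TopologicalSpace

theorem Ultrafilter.map_ne_map_of_finite_preimage_range {α β : Type*} {U : Ultrafilter α}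
    (hU : (U : Filter α) ≤ cofinite) {f g : α → β} (hfg : (f ⁻¹' range g).Finite) :
    U.map f ≠ U.map g := by
  intro heq
  have hg : range g ∈ U.map g := by rw [Ultrafilter.mem_map, preimage_range]; exact univ_mem
  rw [← heq, Ultrafilter.mem_map] at hg
  exact Ultrafilter.compl_notMem_iff.mpr hg (hU hfg.compl_mem_cofinite)

def prefixCode (x : ℕ → Bool) (n : ℕ) : ℕ :=
  Encodable.encode (List.ofFn fun i : Fin n => x i)

theorem eq_of_prefixCode_eq {x y : ℕ → Bool} {m n : ℕ} (h : prefixCode y m = prefixCode x n)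
    {j : ℕ} (hj : j < n) : x j = y j := by
  have hlist := Encodable.encode_injective h
  obtain rfl : m = n := by simpa using congrArg List.length hlist
  exact (congrFun (List.ofFn_inj.mp hlist) ⟨j, hj⟩).symm

theorem finite_prefixCode_preimage_range {x y : ℕ → Bool} (hxy : x ≠ y) :
    (prefixCode x ⁻¹' range (prefixCode y)).Finite := by
  obtain ⟨j, hj⟩ := Function.ne_iff.mp hxy
  refine (finite_Iic j).subset fun n ⟨m, hm⟩ => ?_
  by_contra hnj
  exact hj (eq_of_prefixCode_eq hm (not_le.mp hnj))

/-- Distinct branches of the binary tree `List Bool ≃ ℕ` push a free ultrafilter forward to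
distinct ultrafilters, since two branches share only finitely many nodes. -/
instance : Uncountable (Ultrafilter ℕ) := by
  let U : Ultrafilter ℕ := .of cofinite
  have hinj : Function.Injective fun x => U.map (prefixCode x) := fun x y hxy => by
    by_contra hne
    exact Ultrafilter.map_ne_map_of_finite_preimage_range (Ultrafilter.of_le _)
      (finite_prefixCode_preimage_range hne) hxy
  have : Uncountable (ℕ → Bool) := by
    rw [← Cardinal.aleph0_lt_mk_iff]
    simpa using Cardinal.cantor Cardinal.aleph0
  exact hinj.uncountable

theorem exists_dual_comp_eq_of_mul_norm_le {𝕜 E F : Type*} [RCLike 𝕜] [NormedAddCommGroup E]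
    [NormedSpace 𝕜 E] [NormedAddCommGroup F] [NormedSpace 𝕜 F] (T : E →L[𝕜] F) {c : ℝ}
    (hc : 0 < c) (hT : ∀ y, c * ‖y‖ ≤ ‖T y‖) (φ : StrongDual 𝕜 E) :
    ∃ f : StrongDual 𝕜 F, f ∘L T = φ ∧ ‖f‖ ≤ c⁻¹ * ‖φ‖ := by
  have hinj : Function.Injective T := fun y z hyz => by
    have := hT (y - z)
    rw [map_sub, hyz, sub_self, norm_zero] at this
    exact sub_eq_zero.mp (norm_le_zero_iff.mp (nonpos_of_mul_nonpos_right this hc))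
  let e := LinearEquiv.ofInjective (T : E →ₗ[𝕜] F) hinj
  have hbound : ∀ w, ‖φ (e.symm w)‖ ≤ c⁻¹ * ‖φ‖ * ‖w‖ := fun w => calc
    ‖φ (e.symm w)‖ ≤ ‖φ‖ * ‖e.symm w‖ := φ.le_opNorm _
    _ ≤ ‖φ‖ * (c⁻¹ * ‖T (e.symm w)‖) := by
      gcongr; rw [le_inv_mul_iff₀ hc]; exact hT _
    _ = c⁻¹ * ‖φ‖ * ‖w‖ := by
      rw [show T (e.symm w) = w from LinearEquiv.ofInjective_symm_apply (f := T.toLinearMap) w,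
        Submodule.coe_norm]
      ring
  let g := (φ.toLinearMap ∘ₗ e.symm.toLinearMap).mkContinuous _ hbound
  obtain ⟨f, hfg, hf⟩ := exists_extension_norm_eq _ g
  refine ⟨f, ContinuousLinearMap.ext fun y => ?_,
    hf ▸ LinearMap.mkContinuous_norm_le _ (by positivity) _⟩
  simpa [g, e] using hfg (e y)

theorem exists_dual_lp_one_single_eq_indicator {α : Type*} [DecidableEq α] (S : Set α) :
    ∃ φ : StrongDual ℝ (lp (fun _ : α => ℝ) 1), ‖φ‖ ≤ 1 ∧
      ∀ n, φ (lp.single 1 n 1) = S.indicator 1 n := by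
  classical
  let P : α → ℝ →L[ℝ] ℝ := fun n => if n ∈ S then .id ℝ ℝ else 0
  have hP : ∀ n, ‖P n‖ ≤ 1 := fun n => by
    by_cases hn : n ∈ S <;> simp [P, hn]
  refine ⟨lp.tsumCLM ℝ α ℝ ∘L lp.mapCLM 1 P zero_le_one hP, ?_, fun n => ?_⟩
  · refine (ContinuousLinearMap.opNorm_comp_le _ _).trans ?_
    simpa using mul_le_one₀ lp.norm_tsumCLM_le (norm_nonneg _) (lp.norm_mapCLM_le 1 P _ hP)
  · rw [ContinuousLinearMap.comp_apply, lp.tsumCLM_apply, tsum_eq_single n]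
    · by_cases hn : n ∈ S <;> simp [P, hn]
    · intro m hm
      simp [P, hm]

theorem TopologicalSpace.IsSeparable.countable_of_separated {α ι : Type*} [PseudoMetricSpace α]
    {s : Set α} (hs : IsSeparable s) {v : ι → α} (hvs : ∀ i, v i ∈ s) {ε : ℝ} (hε : 0 < ε)
    (hv : Pairwise fun i j => ε ≤ dist (v i) (v j)) : Countable ι := by
  obtain ⟨c, hc, hsc⟩ := hs
  choose d hdc hvd using fun i => Metric.mem_closure_iff.mp (hsc (hvs i)) (ε / 2) (half_pos hε)
  have hd : Function.Injective fun i => (⟨d i, hdc i⟩ : c) := fun i j hij => by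
    by_contra hne
    have hdij : d i = d j := congrArg Subtype.val hij
    have := dist_triangle_right (v i) (v j) (d j)
    linarith [hv hne, hdij ▸ hvd i, hvd j]
  have := hc.to_subtype
  exact hd.countable

theorem exists_not_countable_linearIndepOn_mkQ {𝕜 E ι : Type*} [NormedField 𝕜]
    [SeparableSpace 𝕜] [NormedAddCommGroup E] [NormedSpace 𝕜 E] [Uncountable ι] {W : Submodule 𝕜 E}
    (hW : IsSeparable (W : Set E)) {v : ι → E} {ε : ℝ} (hε : 0 < ε)
    (hv : Pairwise fun i j => ε ≤ ‖v i - v j‖) :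
    ∃ A : Set ι, ¬ A.Countable ∧ LinearIndepOn 𝕜 (W.mkQ ∘ v) A := by
  obtain ⟨A, hA, hmax⟩ := exists_maximal_linearIndepOn 𝕜 (W.mkQ ∘ v)
  refine ⟨A, fun hAc => not_countable (α := ι) ?_, hA⟩
  have hspan : ∀ i, v i ∈ Submodule.span 𝕜 (v '' A) ⊔ W := fun i => by
    rw [sup_comm, ← Submodule.comap_map_mkQ, Submodule.mem_comap, Submodule.map_span,
      image_image]
    by_cases hi : i ∈ A
    · exact Submodule.subset_span (mem_image_of_mem _ hi)
    · obtain ⟨a, ha, hav⟩ := hmax i hi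
      exact (Submodule.smul_mem_iff _ ha).mp hav
  have hsep : IsSeparable ((Submodule.span 𝕜 (v '' A) ⊔ W : Submodule 𝕜 E) : Set E) := by
    rw [← Submodule.span_eq W, ← Submodule.span_union]
    exact ((hAc.image v).isSeparable.union hW).span
  exact hsep.countable_of_separated hspan hε fun i j hij =>
    (hv hij).trans_eq (dist_eq_norm _ _).symm

theorem le_norm_sub_of_tendsto_apply_single {X : Type*} [NormedAddCommGroup X] [NormedSpace ℝ X]
    {T : lp (fun _ : ℕ => ℝ) 1 →L[ℝ] X} {c : ℝ} (hc : 0 < c) (hT : ∀ y, c * ‖y‖ ≤ ‖T y‖)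
    {D : Ultrafilter ℕ → StrongDual ℝ (StrongDual ℝ X)}
    (hD : ∀ (p : Ultrafilter ℕ) (f : StrongDual ℝ X),
      Tendsto (fun n => f (T (lp.single 1 n (1:ℝ)))) (↑p : Filter ℕ) (nhds (D p f)))
    {p q : Ultrafilter ℕ} (hpq : p ≠ q) : c ≤ ‖D p - D q‖ := by
  obtain ⟨S, hSp, hSq⟩ := Filter.not_le.mp (mt Ultrafilter.coe_le_coe.mp hpq.symm)
  obtain ⟨φ, hφ, hφS⟩ := exists_dual_lp_one_single_eq_indicator S
  obtain ⟨f, hfT, hf⟩ := exists_dual_comp_eq_of_mul_norm_le T hc hT φ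
  have hfS : ∀ n, f (T (lp.single 1 n 1)) = S.indicator 1 n := fun n => by
    rw [← hφS, ← hfT, ContinuousLinearMap.comp_apply]
  have hDp : D p f = 1 := tendsto_nhds_unique (hD p f) <| tendsto_const_nhds.congr' <|
    mem_of_superset hSp fun n hn => by simp [hfS, hn]
  have hDq : D q f = 0 := tendsto_nhds_unique (hD q f) <| tendsto_const_nhds.congr' <|
    mem_of_superset (Ultrafilter.compl_mem_iff_notMem.mpr hSq) fun n hn => by simp_all
  have : 1 ≤ ‖D p - D q‖ * c⁻¹ := calc
    (1 : ℝ) = ‖(D p - D q) f‖ := by simp [hDp, hDq]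
    _ ≤ ‖D p - D q‖ * ‖f‖ := (D p - D q).le_opNorm f
    _ ≤ ‖D p - D q‖ * c⁻¹ := by
      gcongr; simpa using hf.trans (mul_le_of_le_one_right (by positivity) hφ)
  simpa using (le_mul_inv_iff₀ hc).mp this

theorem statement3_general {X : Type*} [NormedAddCommGroup X] [NormedSpace ℝ X]
    [TopologicalSpace.SeparableSpace X]
    (l : ℕ) (T : Fin l → (lp (fun _ : ℕ => ℝ) 1 →L[ℝ] X))
    (hT : ∀ i, ∃ c > (0:ℝ), ∀ y, c * ‖y‖ ≤ ‖(T i) y‖)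
    (D : Fin l → Ultrafilter ℕ → StrongDual ℝ (StrongDual ℝ X))
    (hD : ∀ (i : Fin l) (p : Ultrafilter ℕ) (f : StrongDual ℝ X),
      Tendsto (fun n => f ((T i) (lp.single 1 n (1:ℝ)))) (↑p : Filter ℕ) (nhds (D i p f))) :
    ∀ i, ∃ A : Set (Ultrafilter ℕ), ¬ A.Countable ∧
      LinearIndependent ℝ (fun p : A =>
        (Submodule.Quotient.mk (D i p) :
          StrongDual ℝ (StrongDual ℝ X) ⧸
            LinearMap.range ((NormedSpace.inclusionInDoubleDual ℝ X)
              : X →ₗ[ℝ] StrongDual ℝ (StrongDual ℝ X)))) := by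
  intro i
  obtain ⟨c, hc, hTc⟩ := hT i
  have hX : IsSeparable (LinearMap.range
      (NormedSpace.inclusionInDoubleDual ℝ X : X →ₗ[ℝ] StrongDual ℝ (StrongDual ℝ X)) :
        Set (StrongDual ℝ (StrongDual ℝ X))) := by
    rw [LinearMap.coe_range]
    exact isSeparable_range (NormedSpace.inclusionInDoubleDual ℝ X).continuous
  exact exists_not_countable_linearIndepOn_mkQ (𝕜 := ℝ) (v := D i) hX hc
    fun p q hpq => le_norm_sub_of_tendsto_apply_single hc hTc (hD i) hpq

/-- Let `X` be separable and `T i : ℓ₁ → X` isomorphic embeddings for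
`1 ≤ i ≤ l`.  Identifying `βℕ` with the ultrafilters on `ℕ` and `T i** δ_p` with the
element `D i p` of `X**` determined by `(D i p)(x*) = lim_p x*(T i e_n)`, for every `i`
there is an uncountable set `A i ⊆ βℕ` such that `{Q (T i** δ_p) : p ∈ A i}` is linearly
independent in `X** / X`, where `Q` is the quotient map. -/
theorem statement3 {X : Type*} [NormedAddCommGroup X] [NormedSpace ℝ X] [CompleteSpace X]
    [TopologicalSpace.SeparableSpace X]
    (l : ℕ) (T : Fin l → (lp (fun _ : ℕ => ℝ) 1 →L[ℝ] X))
    (hT : ∀ i, ∃ c > (0:ℝ), ∀ y, c * ‖y‖ ≤ ‖(T i) y‖)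
    (D : Fin l → Ultrafilter ℕ → StrongDual ℝ (StrongDual ℝ X))
    (hD : ∀ (i : Fin l) (p : Ultrafilter ℕ) (f : StrongDual ℝ X),
      Tendsto (fun n => f ((T i) (lp.single 1 n (1:ℝ)))) (↑p : Filter ℕ) (nhds (D i p f))) :
    ∀ i, ∃ A : Set (Ultrafilter ℕ), ¬ A.Countable ∧
      LinearIndependent ℝ (fun p : A =>
        (Submodule.Quotient.mk (D i p) :
          StrongDual ℝ (StrongDual ℝ X) ⧸
            LinearMap.range ((NormedSpace.inclusionInDoubleDual ℝ X)
              : X →ₗ[ℝ] StrongDual ℝ (StrongDual ℝ X)))) :=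
  statement3_general l T hT D hD
end

section
/- Let (e_n^i)_{i=1,...,l; n∈ℕ} be a plegma spreading sequence in a Banach space such that each individual sequence (e_n^i)_n is weakly null. Then the collection (e_n^i)_{i=1,...,l; n∈ℕ} is an unconditional basic sequence: for every ε > 0, every finite set π = {1,...,l}×{1,...,k}, every choice of scalars (a_{ij}), and every subset F ⊂ π, one has ‖Σ_{(i,j)∈F} a_{ij} e_j^i‖ ≤ (1+ε)‖Σ_{(i,j)∈π} a_{ij} e_j^i‖. -/
open Filter

/-- A sequence is Schauder basic: there is a uniform bound on the basis projections. -/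
def IsSchauderBasicSeq {X : Type*} [NormedAddCommGroup X] [NormedSpace ℝ X] (v : ℕ → X) : Prop :=
  ∃ C : ℝ, 0 < C ∧ ∀ m n : ℕ, m ≤ n → ∀ a : ℕ → ℝ,
    ‖∑ j ∈ Finset.range m, a j • v j‖ ≤ C * ‖∑ j ∈ Finset.range n, a j • v j‖

/-- A plegma family `(s i)_{i < l}` in `[ℕ]^k`. -/
def IsPlegma (l k : ℕ) (s : Fin l → Fin k → ℕ) : Prop :=
  (∀ (i₁ i₂ : Fin l) (j₁ j₂ : Fin k), j₁ < j₂ → s i₁ j₁ < s i₂ j₂) ∧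
  (∀ i₁ i₂ : Fin l, i₁ < i₂ → ∀ j : Fin k, s i₁ j ≤ s i₂ j)

/-- A plegma spreading sequence: each `e i` is a normalized Schauder basic sequence, and the
norm of any vector in the span is invariant under all plegma shifts. -/
def IsPlegmaSpreading {X : Type*} [NormedAddCommGroup X] [NormedSpace ℝ X]
    (l : ℕ) (e : Fin l → ℕ → X) : Prop :=
  (∀ i n, ‖e i n‖ = 1) ∧ (∀ i, IsSchauderBasicSeq (e i)) ∧
  ∀ (k : ℕ) (a : Fin l → Fin k → ℝ) (s : Fin l → Fin k → ℕ), IsPlegma l k s →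
    ‖∑ i, ∑ j, a i j • e i (j : ℕ)‖ = ‖∑ i, ∑ j, a i j • e i (s i j)‖

lemma mazur {X : Type*} [NormedAddCommGroup X] [NormedSpace ℝ X]
    (v : ℕ → X) (hwn : ∀ f : X →L[ℝ] ℝ, Tendsto (fun n => f (v n)) atTop (nhds 0))
    (N : ℕ) (δ : ℝ) (hδ : 0 < δ) :
    ∃ z ∈ convexHull ℝ (v '' Set.Ici N), ‖z‖ < δ := by
  by_contra h
  push_neg at h
  have h0 : (0:X) ∉ closure (convexHull ℝ (v '' Set.Ici N)) := by
    rw [Metric.mem_closure_iff]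
    push_neg
    refine ⟨δ, hδ, fun z hz => ?_⟩
    simpa [dist_eq_norm] using h z hz
  obtain ⟨f, u, hfa, hu⟩ := geometric_hahn_banach_closed_point
    ((convex_convexHull ℝ _).closure) isClosed_closure h0
  have hu0 : u < 0 := by simpa using hu
  have hev : ∀ᶠ n in atTop, u < f (v n) := (hwn f).eventually (eventually_gt_nhds hu0)
  obtain ⟨n, hn, hn2⟩ := (hev.and (eventually_ge_atTop N)).exists
  exact absurd (hfa (v n) (subset_closure (subset_convexHull ℝ _ ⟨n, hn2, rfl⟩))) (not_lt.2 hn.le)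

lemma mazur' {X : Type*} [NormedAddCommGroup X] [NormedSpace ℝ X]
    (v : ℕ → X) (hwn : ∀ f : X →L[ℝ] ℝ, Tendsto (fun n => f (v n)) atTop (nhds 0))
    (N : ℕ) (δ : ℝ) (hδ : 0 < δ) :
    ∃ (ι : Type) (t : Finset ι) (c : ι → ℝ) (n : ι → ℕ),
      (∀ i ∈ t, 0 ≤ c i) ∧ (∑ i ∈ t, c i) = 1 ∧ (∀ i ∈ t, N ≤ n i) ∧
      ‖∑ i ∈ t, c i • v (n i)‖ < δ := by
  obtain ⟨z, hz, hznorm⟩ := mazur v hwn N δ hδ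
  rw [convexHull_eq] at hz
  obtain ⟨ι, t, w, g, hw0, hw1, hg, hcm⟩ := hz
  have hn : ∀ i ∈ t, ∃ m, N ≤ m ∧ v m = g i := by
    intro i hi; obtain ⟨m, hm, hvm⟩ := hg i hi; exact ⟨m, hm, hvm⟩
  choose! n hn1 hn2 using hn
  refine ⟨ι, t, w, n, hw0, hw1, hn1, ?_⟩
  have he : ∑ i ∈ t, w i • v (n i) = z := by
    rw [← hcm, Finset.centerMass_eq_of_sum_1 _ _ hw1]
    exact Finset.sum_congr rfl fun i hi => by rw [hn2 i hi]
  rwa [he]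

def pshift {l k : ℕ} (p0 : Fin l × Fin k) (M c : ℕ) (i : Fin l) (j : Fin k) : ℕ :=
  if (i:ℕ) = (p0.1:ℕ) ∧ (j:ℕ) = (p0.2:ℕ) then c
  else if (j:ℕ) < (p0.2:ℕ) then (j:ℕ)
  else if (j:ℕ) = (p0.2:ℕ) then (if (i:ℕ) ≤ (p0.1:ℕ) then (p0.2:ℕ) else M)
  else M + ((j:ℕ) - (p0.2:ℕ))

lemma pshift_plegma {l k : ℕ} (p0 : Fin l × Fin k) (M c : ℕ)
    (hM : k < M) (hc1 : (p0.2:ℕ) ≤ c) (hc2 : c ≤ M) : IsPlegma l k (pshift p0 M c) := by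
  have h3 := p0.2.isLt
  constructor
  · intro i₁ i₂ j₁ j₂ hj
    have hj' : (j₁:ℕ) < (j₂:ℕ) := hj
    have h1 := j₁.isLt; have h2 := j₂.isLt
    unfold pshift
    split_ifs <;> omega
  · intro i₁ i₂ hi j
    have hi' : (i₁:ℕ) < (i₂:ℕ) := hi
    have h1 := j.isLt
    unfold pshift
    split_ifs <;> omega

lemma suppress_one {X : Type*} [NormedAddCommGroup X] [NormedSpace ℝ X]
    (l : ℕ) (e : Fin l → ℕ → X) (hps : IsPlegmaSpreading l e)
    (hwn : ∀ (i : Fin l) (f : X →L[ℝ] ℝ), Tendsto (fun n => f (e i n)) atTop (nhds 0))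
    (k : ℕ) (a a' : Fin l → Fin k → ℝ) (p0 : Fin l × Fin k)
    (ha' : ∀ i j, a' i j = if (i, j) = p0 then 0 else a i j) :
    ‖∑ i, ∑ j, a' i j • e i (j:ℕ)‖ ≤ ‖∑ i, ∑ j, a i j • e i (j:ℕ)‖ := by
  obtain ⟨-, -, hsp⟩ := hps
  have expand : ∀ (s : Fin l → Fin k → ℕ) (b : Fin l → Fin k → ℝ),
      (∑ i, ∑ j, b i j • e i (s i j)) = ∑ p : Fin l × Fin k, b p.1 p.2 • e p.1 (s p.1 p.2) :=
    fun s b => (Fintype.sum_prod_type (f := fun p : Fin l × Fin k => b p.1 p.2 • e p.1 (s p.1 p.2))).symm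
  refine le_of_forall_pos_le_add fun δ hδ => ?_
  set A := |a p0.1 p0.2| with hA
  have hA0 : (0:ℝ) ≤ A := abs_nonneg _
  have hδ' : 0 < δ / (A + 1) := div_pos hδ (by positivity)
  obtain ⟨ι, t, c, n, hc0, hc1, hnk, hz⟩ := mazur' (e p0.1) (hwn p0.1) k _ hδ'
  set M := max (t.sup n + 1) (k + 1) with hMdef
  have hkM : k < M := lt_of_lt_of_le (Nat.lt_succ_self k) (le_max_right _ _)
  have hnM : ∀ τ ∈ t, n τ ≤ M := fun τ hτ =>
    le_trans (Nat.le_succ_of_le (Finset.le_sup hτ)) (le_max_left _ _)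
  have hj0k : (p0.2:ℕ) < k := p0.2.isLt
  set σ := pshift p0 M (p0.2:ℕ) with hσ
  have hplσ : IsPlegma l k σ := pshift_plegma p0 M _ hkM le_rfl (by omega)
  set y' := ∑ i, ∑ j, a' i j • e i (σ i j) with hy'
  set x := ∑ i, ∑ j, a i j • e i (j:ℕ) with hx
  have hAeq : ‖∑ i, ∑ j, a' i j • e i (j:ℕ)‖ = ‖y'‖ := hsp k a' σ hplσ
  have hB : ∀ τ ∈ t, ‖x‖ = ‖∑ i, ∑ j, a i j • e i (pshift p0 M (n τ) i j)‖ := fun τ hτ =>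
    hsp k a _ (pshift_plegma p0 M (n τ) hkM (le_trans (le_of_lt hj0k) (hnk τ hτ)) (hnM τ hτ))
  have hC : ∀ τ ∈ t, (∑ i, ∑ j, a i j • e i (pshift p0 M (n τ) i j))
      = y' + a p0.1 p0.2 • e p0.1 (n τ) := by
    intro τ hτ
    have h1 : a' p0.1 p0.2 = 0 := by rw [ha']; simp
    have h2 : pshift p0 M (n τ) p0.1 p0.2 = n τ := by unfold pshift; simp
    have h3 : ∀ p ∈ Finset.univ.erase p0,
        a p.1 p.2 • e p.1 (pshift p0 M (n τ) p.1 p.2) = a' p.1 p.2 • e p.1 (σ p.1 p.2) := by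
      intro p hp
      have hne : p ≠ p0 := Finset.ne_of_mem_erase hp
      have hne' : ¬((p.1:ℕ) = (p0.1:ℕ) ∧ (p.2:ℕ) = (p0.2:ℕ)) := by
        intro hcon
        exact hne (Prod.ext (Fin.ext hcon.1) (Fin.ext hcon.2))
      have hne'' : (p.1, p.2) ≠ p0 := by rwa [Prod.mk.eta]
      rw [ha', if_neg hne'']
      congr 1
      rw [hσ]; unfold pshift
      rw [if_neg hne', if_neg hne']
    have h4 := Finset.sum_congr rfl h3
    have hy'2 : y' = ∑ p : Fin l × Fin k, a' p.1 p.2 • e p.1 (σ p.1 p.2) := expand σ a'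
    rw [expand, hy'2,
        ← Finset.add_sum_erase _ (fun p : Fin l × Fin k => a p.1 p.2 • e p.1 (pshift p0 M (n τ) p.1 p.2)) (Finset.mem_univ p0),
        ← Finset.add_sum_erase _ (fun p : Fin l × Fin k => a' p.1 p.2 • e p.1 (σ p.1 p.2)) (Finset.mem_univ p0),
        h4, h1, h2, zero_smul, zero_add]
    abel
  have hxτ : ∀ τ ∈ t, ‖y' + a p0.1 p0.2 • e p0.1 (n τ)‖ = ‖x‖ := fun τ hτ => by
    rw [← hC τ hτ, ← hB τ hτ]
  have hcomb : ∑ τ ∈ t, c τ • (y' + a p0.1 p0.2 • e p0.1 (n τ))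
      = y' + a p0.1 p0.2 • (∑ τ ∈ t, c τ • e p0.1 (n τ)) := by
    simp only [smul_add]
    rw [Finset.sum_add_distrib, ← Finset.sum_smul, hc1, one_smul, Finset.smul_sum]
    congr 1
    exact Finset.sum_congr rfl fun τ hτ => smul_comm _ _ _
  have hSz : (∑ τ ∈ t, c τ • (y' + a p0.1 p0.2 • e p0.1 (n τ)))
      - a p0.1 p0.2 • (∑ τ ∈ t, c τ • e p0.1 (n τ)) = y' := by
    rw [hcomb]; abel
  have hnorm : ‖y'‖ ≤ ‖∑ τ ∈ t, c τ • (y' + a p0.1 p0.2 • e p0.1 (n τ))‖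
      + ‖a p0.1 p0.2 • (∑ τ ∈ t, c τ • e p0.1 (n τ))‖ := by
    calc ‖y'‖ = ‖(∑ τ ∈ t, c τ • (y' + a p0.1 p0.2 • e p0.1 (n τ)))
        - a p0.1 p0.2 • (∑ τ ∈ t, c τ • e p0.1 (n τ))‖ := by rw [hSz]
      _ ≤ _ := norm_sub_le _ _
  have hS : ‖∑ τ ∈ t, c τ • (y' + a p0.1 p0.2 • e p0.1 (n τ))‖ ≤ ‖x‖ := by
    refine le_trans (norm_sum_le _ _) ?_
    have h5 : ∀ τ ∈ t, ‖c τ • (y' + a p0.1 p0.2 • e p0.1 (n τ))‖ = c τ * ‖x‖ := fun τ hτ => by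
      rw [norm_smul, Real.norm_eq_abs, abs_of_nonneg (hc0 τ hτ), hxτ τ hτ]
    rw [Finset.sum_congr rfl h5, ← Finset.sum_mul, hc1, one_mul]
  have hz' : ‖a p0.1 p0.2 • (∑ τ ∈ t, c τ • e p0.1 (n τ))‖ ≤ δ := by
    rw [norm_smul, Real.norm_eq_abs, ← hA]
    have hd : A * (δ / (A + 1)) ≤ δ := by
      rw [mul_div_assoc', div_le_iff₀ (by positivity)]
      nlinarith
    nlinarith [hz.le, norm_nonneg (∑ τ ∈ t, c τ • e p0.1 (n τ))]
  rw [hAeq]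
  linarith

/-- A plegma spreading sequence all of whose component sequences are weakly
null is unconditional: every restriction of coefficients to a subset `F ⊆ π` increases the
norm by a factor of at most `1 + ε`, for every `ε > 0`. -/
theorem statement4 {X : Type*} [NormedAddCommGroup X] [NormedSpace ℝ X] [CompleteSpace X]
    (l : ℕ) (e : Fin l → ℕ → X) (hps : IsPlegmaSpreading l e)
    (hwn : ∀ (i : Fin l) (f : X →L[ℝ] ℝ), Tendsto (fun n => f (e i n)) atTop (nhds 0)) :
    ∀ ε > (0:ℝ), ∀ (k : ℕ) (a : Fin l → Fin k → ℝ) (F : Finset (Fin l × Fin k)),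
      ‖∑ p ∈ F, a p.1 p.2 • e p.1 (p.2 : ℕ)‖ ≤
        (1 + ε) * ‖∑ i, ∑ j, a i j • e i (j : ℕ)‖ := by
  intro ε hε k a F
  have key : ∀ (G : Finset (Fin l × Fin k)) (b : Fin l → Fin k → ℝ),
      ‖∑ i, ∑ j, (if (i, j) ∈ G then 0 else b i j) • e i (j:ℕ)‖
        ≤ ‖∑ i, ∑ j, b i j • e i (j:ℕ)‖ := by
    intro G
    induction G using Finset.induction with
    | empty => intro b; simp
    | @insert q G hq ih =>
      intro b
      have h1 : ∀ i j, (if (i, j) ∈ insert q G then (0:ℝ) else b i j)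
          = (if (i, j) ∈ G then 0 else (if (i, j) = q then 0 else b i j)) := by
        intro i j
        by_cases h : (i, j) ∈ G <;> by_cases h2 : (i, j) = q <;>
          simp [h, h2, Finset.mem_insert]
      calc ‖∑ i, ∑ j, (if (i, j) ∈ insert q G then (0:ℝ) else b i j) • e i (j:ℕ)‖
          = ‖∑ i, ∑ j, (if (i, j) ∈ G then (0:ℝ)
              else (if (i, j) = q then 0 else b i j)) • e i (j:ℕ)‖ := by
            congr 1
            exact Finset.sum_congr rfl fun i _ => Finset.sum_congr rfl fun j _ => by rw [h1]
        _ ≤ ‖∑ i, ∑ j, (if (i, j) = q then (0:ℝ) else b i j) • e i (j:ℕ)‖ :=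
            ih (fun i j => if (i, j) = q then 0 else b i j)
        _ ≤ ‖∑ i, ∑ j, b i j • e i (j:ℕ)‖ :=
            suppress_one l e hps hwn k b _ q (fun i j => rfl)
  have hF : ∑ p ∈ F, a p.1 p.2 • e p.1 (p.2:ℕ)
      = ∑ i, ∑ j, (if (i, j) ∈ Fᶜ then (0:ℝ) else a i j) • e i (j:ℕ) := by
    rw [← Fintype.sum_prod_type
      (f := fun p : Fin l × Fin k => (if p ∈ Fᶜ then (0:ℝ) else a p.1 p.2) • e p.1 (p.2:ℕ))]
    rw [← Finset.sum_filter_add_sum_filter_not Finset.univ (· ∈ F)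
      (fun p : Fin l × Fin k => (if p ∈ Fᶜ then (0:ℝ) else a p.1 p.2) • e p.1 (p.2:ℕ))]
    have e1 : Finset.univ.filter (· ∈ F) = F := by
      ext p; simp
    have e2 : ∀ p ∈ Finset.univ.filter (· ∉ F),
        (if p ∈ Fᶜ then (0:ℝ) else a p.1 p.2) • e p.1 (p.2:ℕ) = 0 := by
      intro p hp
      simp only [Finset.mem_filter] at hp
      rw [if_pos (Finset.mem_compl.2 hp.2), zero_smul]
    rw [Finset.sum_congr rfl e2, Finset.sum_const_zero, add_zero, e1]
    refine Finset.sum_congr rfl fun p hp => ?_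
    rw [if_neg (by simpa using hp)]
  have hle := key Fᶜ a
  have hnn : (0:ℝ) ≤ ‖∑ i, ∑ j, a i j • e i (j:ℕ)‖ := norm_nonneg _
  rw [hF]
  nlinarith
end

section
/- Let (e_n^i)_{i=1,...,l; n∈ℕ} be a plegma spreading sequence in a Banach space such that each individual sequence (e_n^i)_n is equivalent to the unit vector basis of ℓ₁. Then the whole collection (e_n^i)_{i=1,...,l; n∈ℕ} is equivalent to the unit vector basis of ℓ₁, i.e. there exists c > 0 such that ‖Σ_{i,j} a_{ij} e_j^i‖ ≥ c Σ_{i,j} |a_{ij}| for all finitely supported scalars. -/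
private lemma range_two_mul_sum {M : Type*} [AddCommMonoid M] (k : ℕ) (f : ℕ → M) :
    ∑ q ∈ Finset.range (2*k), f q = ∑ j ∈ Finset.range k, (f (2*j) + f (2*j+1)) := by
  induction k with
  | zero => simp
  | succ k ih =>
    have h2 : 2*(k+1) = (2*k+1)+1 := by ring
    rw [h2, Finset.sum_range_succ, Finset.sum_range_succ, ih, Finset.sum_range_succ]
    abel

private lemma fin_two_mul_sum {M : Type*} [AddCommMonoid M] (k : ℕ) (f : ℕ → M) :
    ∑ q : Fin (2*k), f (q:ℕ) = ∑ j : Fin k, (f (2*(j:ℕ)) + f (2*(j:ℕ)+1)) := by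
  rw [Fin.sum_univ_eq_sum_range f, Fin.sum_univ_eq_sum_range (fun j => f (2*j) + f (2*j+1))]
  exact range_two_mul_sum k f

-- key lemma: extract row 0
private lemma key_row0 {X : Type*} [NormedAddCommGroup X] [NormedSpace ℝ X]
    (m : ℕ) (e : Fin (m+1) → ℕ → X) (hps : IsPlegmaSpreading (m+1) e)
    (c₀ : ℝ) (hc₀ : 0 < c₀)
    (h₀ : ∀ (k : ℕ) (a : Fin k → ℝ), c₀ * ∑ j, |a j| ≤ ‖∑ j, a j • e 0 (j : ℕ)‖)
    (k : ℕ) (a : Fin (m+1) → Fin k → ℝ) :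
    c₀ * ∑ j, |a 0 j| ≤ ‖∑ i, ∑ j, a i j • e i (j:ℕ)‖ := by
  set x := ∑ i, ∑ j, a i j • e i (j:ℕ) with hx
  have hs : IsPlegma (m+1) k (fun i j => if i = 0 then 2*(j:ℕ) else 2*(j:ℕ)+1) := by
    constructor
    · intro i₁ i₂ j₁ j₂ hj
      have hj' : (j₁:ℕ) < (j₂:ℕ) := hj
      dsimp only
      split <;> split <;> omega
    · intro i₁ i₂ hi j
      dsimp only
      by_cases h1 : i₁ = 0
      · rw [if_pos h1]; split <;> omega
      · have h2 : i₂ ≠ 0 := by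
          intro h; rw [h] at hi; exact absurd hi (Fin.not_lt_zero i₁)
        rw [if_neg h1, if_neg h2]
  have ht : IsPlegma (m+1) k (fun _ j => 2*(j:ℕ)+1) := by
    constructor
    · intro i₁ i₂ j₁ j₂ hj
      have hj' : (j₁:ℕ) < (j₂:ℕ) := hj
      dsimp only; omega
    · intro _ _ _ j; exact le_refl _
  have hes := hps.2.2 k a _ hs
  have het := hps.2.2 k a _ ht
  have hdiff : (∑ i, ∑ j, a i j • e i (if i = 0 then 2*(j:ℕ) else 2*(j:ℕ)+1))
        - (∑ i, ∑ j, a i j • e i (2*(j:ℕ)+1))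
      = ∑ j : Fin k, (a 0 j • e 0 (2*(j:ℕ)) - a 0 j • e 0 (2*(j:ℕ)+1)) := by
    rw [← Finset.sum_sub_distrib, Fin.sum_univ_succ]
    have hz : ∀ i : Fin m,
        ((∑ j : Fin k, a i.succ j • e i.succ (if i.succ = 0 then 2*(j:ℕ) else 2*(j:ℕ)+1))
          - ∑ j : Fin k, a i.succ j • e i.succ (2*(j:ℕ)+1)) = 0 := by
      intro i
      simp [Fin.succ_ne_zero]
    simp only [hz, Finset.sum_const_zero, add_zero, if_pos rfl]
    rw [← Finset.sum_sub_distrib]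
    simp
  set A : ℕ → ℝ := fun n => if h : n < k then a 0 ⟨n, h⟩ else 0 with hA
  set b : ℕ → ℝ := fun q => if q % 2 = 0 then A (q/2) else -A (q/2) with hb
  have hb1 : ∀ j : ℕ, b (2*j) = A j := by
    intro j
    have e1 : (2*j) % 2 = 0 := by omega
    have e2 : (2*j)/2 = j := by omega
    simp [hb, e1, e2]
  have hb2 : ∀ j : ℕ, b (2*j+1) = -A j := by
    intro j
    have e1 : ¬ ((2*j+1) % 2 = 0) := by omega
    have e2 : (2*j+1)/2 = j := by omega
    simp [hb, e1, e2]
  have hAj : ∀ j : Fin k, A (j:ℕ) = a 0 j := by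
    intro j; simp [hA, j.isLt]
  have hsum_b : ∑ q : Fin (2*k), |b (q:ℕ)| = 2 * ∑ j, |a 0 j| := by
    rw [fin_two_mul_sum k (fun q => |b q|)]
    have h1 : ∀ j : Fin k, |b (2*(j:ℕ))| + |b (2*(j:ℕ)+1)| = 2 * |a 0 j| := by
      intro j; rw [hb1, hb2, hAj j, abs_neg]; ring
    rw [Finset.sum_congr rfl (fun j _ => h1 j), ← Finset.mul_sum]
  have hvec : ∑ q : Fin (2*k), b (q:ℕ) • e 0 (q:ℕ)
      = ∑ j : Fin k, (a 0 j • e 0 (2*(j:ℕ)) - a 0 j • e 0 (2*(j:ℕ)+1)) := by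
    rw [fin_two_mul_sum k (fun q => b q • e 0 q)]
    refine Finset.sum_congr rfl (fun j _ => ?_)
    rw [hb1, hb2, hAj j, neg_smul]
    abel
  have hl := h₀ (2*k) (fun q => b (q:ℕ))
  rw [hsum_b, hvec] at hl
  have hnorm : ‖∑ j : Fin k, (a 0 j • e 0 (2*(j:ℕ)) - a 0 j • e 0 (2*(j:ℕ)+1))‖ ≤ 2 * ‖x‖ := by
    rw [← hdiff]
    calc ‖(∑ i, ∑ j, a i j • e i (if i = 0 then 2*(j:ℕ) else 2*(j:ℕ)+1))
            - (∑ i, ∑ j, a i j • e i (2*(j:ℕ)+1))‖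
        ≤ ‖∑ i, ∑ j, a i j • e i (if i = 0 then 2*(j:ℕ) else 2*(j:ℕ)+1)‖
          + ‖∑ i, ∑ j, a i j • e i (2*(j:ℕ)+1)‖ := norm_sub_le _ _
      _ = 2 * ‖x‖ := by rw [← hes, ← het]; ring
  linarith [hl.trans hnorm]

theorem statement5Aux {X : Type*} [NormedAddCommGroup X] [NormedSpace ℝ X] :
    ∀ (l : ℕ) (e : Fin l → ℕ → X), IsPlegmaSpreading l e →
    (∀ i : Fin l, ∃ c > (0:ℝ), ∃ C > (0:ℝ), ∀ (k : ℕ) (a : Fin k → ℝ),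
      c * ∑ j, |a j| ≤ ‖∑ j, a j • e i (j : ℕ)‖ ∧
        ‖∑ j, a j • e i (j : ℕ)‖ ≤ C * ∑ j, |a j|) →
    ∃ c > (0:ℝ), ∀ (k : ℕ) (a : Fin l → Fin k → ℝ),
      c * ∑ i, ∑ j, |a i j| ≤ ‖∑ i, ∑ j, a i j • e i (j : ℕ)‖ := by
  intro l
  induction l with
  | zero =>
    intro e _ _
    exact ⟨1, one_pos, fun k a => by simp⟩
  | succ m ih =>
    intro e hps hl1
    obtain ⟨c₀, hc₀, C₀, hC₀, h₀⟩ := hl1 0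
    -- the restricted family is plegma spreading
    have hps' : IsPlegmaSpreading m (fun i : Fin m => e i.succ) := by
      refine ⟨fun i n => hps.1 i.succ n, fun i => hps.2.1 i.succ, ?_⟩
      intro k a s' hs'
      rcases Nat.eq_zero_or_pos m with hm | hm
      · subst hm; simp
      · set g : Fin (m+1) → Fin m := fun i => ⟨(i:ℕ) - 1, by omega⟩ with hg
        have hgsucc : ∀ i : Fin m, g i.succ = i := by
          intro i; simp [hg, Fin.ext_iff]
        have hshat : IsPlegma (m+1) k (fun i j => s' (g i) j) := by
          constructor
          · intro i₁ i₂ j₁ j₂ hj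
            exact hs'.1 (g i₁) (g i₂) j₁ j₂ hj
          · intro i₁ i₂ hi j
            have hval : (i₁:ℕ) < (i₂:ℕ) := hi
            have hle : g i₁ ≤ g i₂ := by
              simp only [hg, Fin.le_def]; omega
            rcases lt_or_eq_of_le hle with h | h
            · exact hs'.2 _ _ h j
            · dsimp only; rw [h]
        have h3 := hps.2.2 k (Fin.cases (fun _ => 0) a) _ hshat
        simp only [Fin.sum_univ_succ, Fin.cases_zero, Fin.cases_succ, zero_smul,
          Finset.sum_const_zero, zero_add, hgsucc] at h3
        exact h3
    obtain ⟨c', hc', hih⟩ := ih (fun i : Fin m => e i.succ) hps'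
      (fun i => hl1 i.succ)
    refine ⟨c₀ * c' / (c' + c₀ + C₀), div_pos (mul_pos hc₀ hc') (by linarith), ?_⟩
    intro k a
    set x := ∑ i, ∑ j, a i j • e i (j:ℕ) with hx
    set S0 := ∑ j, |a 0 j| with hS0
    set S1 := ∑ i : Fin m, ∑ j, |a i.succ j| with hS1
    have hx0 : c₀ * S0 ≤ ‖x‖ :=
      key_row0 m e hps c₀ hc₀ (fun k a => (h₀ k a).1) k a
    have hrow0 : ‖∑ j, a 0 j • e 0 (j:ℕ)‖ ≤ C₀ * S0 := (h₀ k (a 0)).2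
    have hxr : c' * S1 ≤ ‖∑ i : Fin m, ∑ j, a i.succ j • e i.succ (j:ℕ)‖ :=
      hih k (fun i => a i.succ)
    have hsplit : x = (∑ j, a 0 j • e 0 (j:ℕ))
        + ∑ i : Fin m, ∑ j, a i.succ j • e i.succ (j:ℕ) := Fin.sum_univ_succ _
    have hxsum : ∑ i : Fin (m+1), ∑ j, |a i j| = S0 + S1 := Fin.sum_univ_succ _
    have hrest : ‖∑ i : Fin m, ∑ j, a i.succ j • e i.succ (j:ℕ)‖ ≤ ‖x‖ + C₀ * S0 := by
      have : (∑ i : Fin m, ∑ j, a i.succ j • e i.succ (j:ℕ))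
          = x - ∑ j, a 0 j • e 0 (j:ℕ) := by rw [hsplit]; abel
      rw [this]
      calc ‖x - ∑ j, a 0 j • e 0 (j:ℕ)‖ ≤ ‖x‖ + ‖∑ j, a 0 j • e 0 (j:ℕ)‖ := norm_sub_le _ _
        _ ≤ ‖x‖ + C₀ * S0 := by linarith
    rw [hxsum, div_mul_eq_mul_div, div_le_iff₀ (by linarith)]
    have hN : (0:ℝ) ≤ ‖x‖ := norm_nonneg _
    have h1 : c' * (c₀ * S0) ≤ c' * ‖x‖ := by
      exact mul_le_mul_of_nonneg_left hx0 hc'.le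
    have h2 : c₀ * (c' * S1) ≤ c₀ * (‖x‖ + C₀ * S0) :=
      mul_le_mul_of_nonneg_left (hxr.trans hrest) hc₀.le
    have h3 : C₀ * (c₀ * S0) ≤ C₀ * ‖x‖ := mul_le_mul_of_nonneg_left hx0 hC₀.le
    nlinarith [h1, h2, h3]

/-- If `(e i)_{i<l}` is a plegma spreading sequence each of whose component
sequences is equivalent to the unit vector basis of `ℓ₁`, then the whole collection is
equivalent to the unit vector basis of `ℓ₁`. -/
theorem statement5 {X : Type*} [NormedAddCommGroup X] [NormedSpace ℝ X] [CompleteSpace X]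
    (l : ℕ) (e : Fin l → ℕ → X) (hps : IsPlegmaSpreading l e)
    (hl1 : ∀ i : Fin l, ∃ c > (0:ℝ), ∃ C > (0:ℝ), ∀ (k : ℕ) (a : Fin k → ℝ),
      c * ∑ j, |a j| ≤ ‖∑ j, a j • e i (j : ℕ)‖ ∧
        ‖∑ j, a j • e i (j : ℕ)‖ ≤ C * ∑ j, |a j|) :
    ∃ c > (0:ℝ), ∀ (k : ℕ) (a : Fin l → Fin k → ℝ),
      c * ∑ i, ∑ j, |a i j| ≤ ‖∑ i, ∑ j, a i j • e i (j : ℕ)‖ := by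
  exact statement5Aux l e hps hl1
end

section
/- In the James space J, let e_n denote the unit vector basis and define e_n^1 = e_{2n} + e_1 and e_n^2 = e_{2n+1} − e_1. Then for no pair of infinite subsets M, L of ℕ is the combined sequence {e_n^1 : n ∈ M} ∪ {e_n^2 : n ∈ L} (in any enumeration) a Schauder basic sequence. -/
/-- The James norm of a finitely supported sequence: the supremum over all finite
collections of pairwise disjoint intervals `I₁, ..., Iₙ` of
`(∑ i (∑_{k ∈ Iᵢ} a k)²)^{1/2}`. -/
noncomputable def jamesNorm (a : ℕ →₀ ℝ) : ℝ :=
  sSup {r : ℝ | ∃ (n : ℕ) (I : Fin n → Finset ℕ),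
    (∀ i, ∃ p q : ℕ, I i = Finset.Icc p q) ∧
    (∀ i j, i ≠ j → Disjoint (I i) (I j)) ∧
    r = Real.sqrt (∑ i, (∑ k ∈ I i, a k) ^ 2)}

/-!
Pick positions `r 0 < r 1 < ⋯` in the enumeration that alternately hit vectors
`e (k (2i)) + e 1` and `e (k (2i+1)) - e 1` with `k` strictly increasing and never equal to `1`.
The differences `u i = e (k (2i)) - e (k (2i+1)) + 2 • e 1` form a block sequence of `v`, so
they would be basic if `v` were. With signs `+1` on `[0, K)` and `-1` on `[K, 2K)`, the
partial sum up to `K` has coefficient `2K` at `1`, so James norm at least `2K`; in the full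
sum the `e 1` terms cancel, and what is left has all interval sums bounded by `2` (its prefix
sums lie in `[-1, 1]`) and `4K` nonzero coefficients, so James norm at most `4 √K`. For large
`K` no projection constant survives this.
-/

open Finset

namespace IsSchauderBasicSeq

variable {X : Type*} [NormedAddCommGroup X] [NormedSpace ℝ X] {v : ℕ → X}

theorem comp_strictMono (hv : IsSchauderBasicSeq v) {r : ℕ → ℕ} (hr : StrictMono r) :
    IsSchauderBasicSeq (v ∘ r) := by
  obtain ⟨C, hC, hproj⟩ := hv
  refine ⟨C, hC, fun m n hmn b => ?_⟩
  let a : ℕ → ℝ := ∑ i ∈ range n, Pi.single (r i) (b i)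
  have key : ∀ t ≤ n, ∑ j ∈ range (r t), a j • v j = ∑ i ∈ range t, b i • v (r i) := by
    intro t ht
    simp only [a, Finset.sum_apply, Finset.sum_smul]
    rw [sum_comm]
    simp only [Pi.single_apply, ite_smul, zero_smul, sum_ite_eq', mem_range, hr.lt_iff_lt]
    rw [← sum_filter]
    congr 1
    ext i
    simp only [mem_filter, mem_range]
    omega
  simpa only [Function.comp_apply, key m hmn, key n le_rfl] using
    hproj (r m) (r n) (hr.monotone hmn) a

theorem sub_pairs (hv : IsSchauderBasicSeq v) :
    IsSchauderBasicSeq fun i => v (2 * i) - v (2 * i + 1) := by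
  obtain ⟨C, hC, hproj⟩ := hv
  refine ⟨C, hC, fun m n hmn α => ?_⟩
  have key : ∀ t, ∑ j ∈ range (2 * t), ((-1) ^ j * α (j / 2)) • v j =
      ∑ i ∈ range t, α i • (v (2 * i) - v (2 * i + 1)) := by
    intro t
    induction t with
    | zero => simp
    | succ t ih =>
      rw [show 2 * (t + 1) = 2 * t + 1 + 1 by ring, sum_range_succ, sum_range_succ, ih,
        sum_range_succ, show (2 * t + 1) / 2 = t by omega, show 2 * t / 2 = t by omega]
      simp [pow_succ, sub_eq_add_neg, add_assoc]
  simpa only [key] using hproj (2 * m) (2 * n) (by omega) fun j => (-1) ^ j * α (j / 2)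

end IsSchauderBasicSeq

theorem exists_strictMono_forall_of_exists_gt {R : ℕ → ℕ → ℕ → Prop}
    (h : ∀ n c p, ∃ k j, c < k ∧ p < j ∧ R n k j) :
    ∃ k r : ℕ → ℕ, StrictMono k ∧ StrictMono r ∧ ∀ n, R n (k n) (r n) := by
  choose K J hK hJ hR using h
  let g : ℕ → ℕ × ℕ := fun n =>
    Nat.rec (K 0 0 0, J 0 0 0) (fun n ih => (K (n + 1) ih.1 ih.2, J (n + 1) ih.1 ih.2)) n
  have hg : ∀ n, R n (g n).1 (g n).2 := by
    rintro (_ | n)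
    exacts [hR 0 0 0, hR (n + 1) _ _]
  exact ⟨fun n => (g n).1, fun n => (g n).2, strictMono_nat_of_lt_succ fun n => hK _ _ _,
    strictMono_nat_of_lt_succ fun n => hJ _ _ _, hg⟩

theorem exists_gt_apply_eq_of_image_subset_range {α : Type*} {v f : ℕ → α} {S : Set ℕ}
    (hS : S.Infinite) (hf : Function.Injective f) (hsub : f '' S ⊆ Set.range v) (c p : ℕ) :
    ∃ m j, c < m ∧ p < j ∧ v j = f m := by
  have hpre : (v ⁻¹' (f '' (S \ Set.Iic c))).Infinite :=
    ((hS.sdiff (Set.finite_Iic c)).image hf.injOn).preimage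
      ((Set.image_mono Set.sdiff_subset).trans hsub)
  obtain ⟨j, ⟨m, hm, hmj⟩, hpj⟩ := hpre.exists_gt p
  exact ⟨m, j, by simpa using hm.2, hpj, hmj.symm⟩

theorem Finsupp.sum_inter_support_eq {ι M : Type*} [DecidableEq ι] [AddCommMonoid M]
    (a : ι →₀ M) (s : Finset ι) :
    ∑ k ∈ s ∩ a.support, a k = ∑ k ∈ s, a k :=
  sum_subset inter_subset_left fun k hk hks => by simpa [hk] using hks

theorem abs_sum_Icc_le_jamesNorm (a : ℕ →₀ ℝ) (p q : ℕ) :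
    |∑ k ∈ Icc p q, a k| ≤ jamesNorm a := by
  refine le_csSup ⟨∑ k ∈ a.support, |a k|, ?_⟩
    ⟨1, fun _ => Icc p q, fun _ => ⟨p, q, rfl⟩, fun i j h => absurd (Subsingleton.elim i j) h,
      by rw [Fin.sum_univ_one, Real.sqrt_sq_eq_abs]⟩
  rintro r ⟨n, I, -, hdisj, rfl⟩
  have hnonneg : 0 ≤ ∑ i, |∑ k ∈ I i, a k| := sum_nonneg fun _ _ => abs_nonneg _
  calc √(∑ i, (∑ k ∈ I i, a k) ^ 2)
      ≤ ∑ i, |∑ k ∈ I i, a k| := Real.sqrt_le_iff.mpr ⟨hnonneg, by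
        simpa [sq_abs] using sum_sq_le_sq_sum_of_nonneg (s := univ)
          (f := fun i => |∑ k ∈ I i, a k|) fun _ _ => abs_nonneg _⟩
    _ ≤ ∑ i, ∑ k ∈ I i ∩ a.support, |a k| := sum_le_sum fun i _ => by
        rw [← Finsupp.sum_inter_support_eq]; exact abs_sum_le_sum_abs _ _
    _ = ∑ k ∈ univ.biUnion (fun i => I i ∩ a.support), |a k| :=
        (sum_biUnion fun i _ j _ hij =>
          (hdisj i j hij).mono inter_subset_left inter_subset_left).symm
    _ ≤ ∑ k ∈ a.support, |a k| :=
        sum_le_sum_of_subset_of_nonneg (biUnion_subset.mpr fun _ _ => inter_subset_right)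
          fun _ _ _ => abs_nonneg _

theorem jamesNorm_le_of_abs_sum_Icc_le (a : ℕ →₀ ℝ) {B : ℝ}
    (h : ∀ p q, |∑ k ∈ Icc p q, a k| ≤ B) : jamesNorm a ≤ B * √(#a.support) := by
  have hB : 0 ≤ B := (abs_nonneg _).trans (h 0 0)
  refine Real.sSup_le ?_ (by positivity)
  rintro r ⟨n, I, hI, hdisj, rfl⟩
  have hblock : ∀ i, (∑ k ∈ I i, a k) ^ 2 ≤ B ^ 2 * #(I i ∩ a.support) := fun i => by
    obtain ⟨p, q, hpq⟩ := hI i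
    rcases (I i ∩ a.support).eq_empty_or_nonempty with hempty | hne
    · rw [← Finsupp.sum_inter_support_eq, hempty]; simp
    · calc (∑ k ∈ I i, a k) ^ 2 ≤ B ^ 2 := by
            rw [← sq_abs, hpq]; exact pow_le_pow_left₀ (abs_nonneg _) (h p q) 2
        _ ≤ B ^ 2 * #(I i ∩ a.support) :=
            le_mul_of_one_le_right (sq_nonneg B) (by exact_mod_cast hne.card_pos)
  have hcard : ∑ i, #(I i ∩ a.support) ≤ #a.support := by
    rw [← card_biUnion fun i _ j _ hij =>
      (hdisj i j hij).mono inter_subset_left inter_subset_left]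
    exact card_le_card (biUnion_subset.mpr fun _ _ => inter_subset_right)
  rw [← Real.sqrt_sq hB, ← Real.sqrt_mul (sq_nonneg B)]
  gcongr
  calc ∑ i, (∑ k ∈ I i, a k) ^ 2 ≤ ∑ i, B ^ 2 * #(I i ∩ a.support) := sum_le_sum fun i _ => hblock i
    _ ≤ B ^ 2 * #a.support := by
      rw [← mul_sum]; gcongr; exact_mod_cast hcard

theorem abs_sum_Icc_le_of_abs_sum_range_le (a : ℕ → ℝ) {B : ℝ}
    (h : ∀ t, |∑ k ∈ range t, a k| ≤ B) (p q : ℕ) : |∑ k ∈ Icc p q, a k| ≤ 2 * B := by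
  rcases le_or_gt p (q + 1) with hpq | hpq
  · rw [← Finset.Ico_add_one_right_eq_Icc, sum_Ico_eq_sub _ hpq, two_mul]
    exact (abs_sub _ _).trans (add_le_add (h _) (h _))
  · simp [Icc_eq_empty_of_lt (by omega : q < p), (abs_nonneg _).trans (h 0)]

section PairDiffs

noncomputable def pairDiffs (k : ℕ → ℕ) (α : ℕ → ℝ) (N : ℕ) : ℕ →₀ ℝ :=
  ∑ i ∈ range N, α i • (Finsupp.single (k (2 * i)) 1 - Finsupp.single (k (2 * i + 1)) 1)

variable {k : ℕ → ℕ} {α : ℕ → ℝ} {N : ℕ}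

theorem support_pairDiffs_subset : (pairDiffs k α N).support ⊆ (range (2 * N)).image k := by
  intro j hj
  by_contra hjk
  refine Finsupp.mem_support_iff.mp hj ?_
  simp only [pairDiffs, Finsupp.finsetSum_apply, Finsupp.smul_apply, Finsupp.sub_apply,
    Finsupp.single_apply]
  refine sum_eq_zero fun i hi => ?_
  rw [if_neg, if_neg, sub_zero, smul_zero]
  · exact fun h => hjk (mem_image.mpr ⟨2 * i + 1, by simp at hi ⊢; omega, h⟩)
  · exact fun h => hjk (mem_image.mpr ⟨2 * i, by simp at hi ⊢; omega, h⟩)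

theorem abs_sum_range_pairDiffs_le (hk : StrictMono k) (hα : ∀ i, |α i| ≤ 1) (t : ℕ) :
    |∑ j ∈ range t, pairDiffs k α N j| ≤ 1 := by
  have hsum : ∑ j ∈ range t, pairDiffs k α N j =
      ∑ i ∈ (range N).filter (fun i => k (2 * i) < t ∧ t ≤ k (2 * i + 1)), α i := by
    simp only [pairDiffs, Finsupp.finsetSum_apply, Finsupp.smul_apply, Finsupp.sub_apply,
      Finsupp.single_apply, smul_eq_mul]
    rw [sum_comm, sum_filter]
    refine sum_congr rfl fun i _ => ?_
    have := hk (show 2 * i < 2 * i + 1 by omega)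
    rw [← mul_sum, sum_sub_distrib, sum_ite_eq, sum_ite_eq]
    simp only [mem_range]
    split_ifs <;> first | omega | ring
  have hcard : #((range N).filter (fun i => k (2 * i) < t ∧ t ≤ k (2 * i + 1))) ≤ 1 := by
    refine card_le_one.mpr fun i hi i' hi' => ?_
    simp only [mem_filter] at hi hi'
    by_contra hne
    rcases Nat.lt_or_gt_of_ne hne with h | h
    · have := hk.monotone (show 2 * i + 1 ≤ 2 * i' by omega); omega
    · have := hk.monotone (show 2 * i' + 1 ≤ 2 * i by omega); omega
  rw [hsum]
  calc _ ≤ ∑ i ∈ (range N).filter (fun i => k (2 * i) < t ∧ t ≤ k (2 * i + 1)), |α i| :=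
        abs_sum_le_sum_abs _ _
    _ ≤ #((range N).filter (fun i => k (2 * i) < t ∧ t ≤ k (2 * i + 1))) • (1 : ℝ) :=
        sum_le_card_nsmul _ _ _ fun i _ => hα i
    _ ≤ 1 := by simpa using (by exact_mod_cast hcard : (#_ : ℝ) ≤ 1)

end PairDiffs

section JamesBasis

variable {X : Type*} [NormedAddCommGroup X] [NormedSpace ℝ X] {e : ℕ → X}

theorem norm_linearCombination_eq_jamesNorm
    (he : ∀ a : ℕ →₀ ℝ, ‖a.sum fun k c => c • e k‖ = jamesNorm a) (a : ℕ →₀ ℝ) :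
    ‖Finsupp.linearCombination ℝ e a‖ = jamesNorm a := by
  rw [Finsupp.linearCombination_apply, he]

theorem injective_of_norm_eq_jamesNorm
    (he : ∀ a : ℕ →₀ ℝ, ‖a.sum fun k c => c • e k‖ = jamesNorm a) : Function.Injective e := by
  intro j j' hjj'
  by_contra hne
  have h := abs_sum_Icc_le_jamesNorm (Finsupp.single j 1 - Finsupp.single j' 1) j j
  rw [← norm_linearCombination_eq_jamesNorm he] at h
  norm_num [Finsupp.single_eq_of_ne' (Ne.symm hne), hjj'] at h

theorem sum_smul_pairs_eq_linearCombination (k : ℕ → ℕ) (α : ℕ → ℝ) (N : ℕ) :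
    ∑ i ∈ range N, α i • (e (k (2 * i)) - e (k (2 * i + 1)) + (2 : ℝ) • e 1) =
      Finsupp.linearCombination ℝ e
        (pairDiffs k α N + Finsupp.single 1 (2 * ∑ i ∈ range N, α i)) := by
  simp only [pairDiffs, map_add, map_sum, map_smul, map_sub, Finsupp.linearCombination_single,
    one_smul, smul_add, sum_add_distrib, ← sum_smul, smul_smul]
  rw [← sum_mul, mul_comm]

theorem two_mul_abs_sum_le_norm_sum_smul_pairs
    (he : ∀ a : ℕ →₀ ℝ, ‖a.sum fun k c => c • e k‖ = jamesNorm a) {k : ℕ → ℕ}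
    (hk : ∀ j, k j ≠ 1) (α : ℕ → ℝ) (N : ℕ) :
    2 * |∑ i ∈ range N, α i| ≤
      ‖∑ i ∈ range N, α i • (e (k (2 * i)) - e (k (2 * i + 1)) + (2 : ℝ) • e 1)‖ := by
  have h1 : pairDiffs k α N 1 = 0 :=
    Finsupp.notMem_support_iff.mp fun h1 => by
      obtain ⟨j, -, hj⟩ := mem_image.mp (support_pairDiffs_subset h1)
      exact hk j hj
  rw [sum_smul_pairs_eq_linearCombination, norm_linearCombination_eq_jamesNorm he]
  have h := abs_sum_Icc_le_jamesNorm
      (pairDiffs k α N + Finsupp.single 1 (2 * ∑ i ∈ range N, α i)) 1 1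
  rwa [Icc_self, sum_singleton, Finsupp.add_apply, h1, Finsupp.single_eq_same, zero_add, abs_mul,
    abs_two] at h

theorem norm_sum_smul_pairs_le
    (he : ∀ a : ℕ →₀ ℝ, ‖a.sum fun k c => c • e k‖ = jamesNorm a) {k : ℕ → ℕ}
    (hk : StrictMono k) {α : ℕ → ℝ} (hα : ∀ i, |α i| ≤ 1) {N : ℕ}
    (hα0 : ∑ i ∈ range N, α i = 0) :
    ‖∑ i ∈ range N, α i • (e (k (2 * i)) - e (k (2 * i + 1)) + (2 : ℝ) • e 1)‖ ≤
      2 * √(2 * N) := by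
  rw [sum_smul_pairs_eq_linearCombination, norm_linearCombination_eq_jamesNorm he, hα0,
    mul_zero, Finsupp.single_zero, add_zero]
  have hcard : (#(pairDiffs k α N).support : ℝ) ≤ 2 * N := by
    exact_mod_cast (card_le_card support_pairDiffs_subset).trans card_image_le |>.trans
      (card_range _).le
  calc jamesNorm (pairDiffs k α N) ≤ (2 * 1) * √(#(pairDiffs k α N).support) :=
        jamesNorm_le_of_abs_sum_Icc_le _
          (abs_sum_Icc_le_of_abs_sum_range_le _ (abs_sum_range_pairDiffs_le hk hα))
    _ ≤ 2 * √(2 * N) := by rw [mul_one]; gcongr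

theorem not_isSchauderBasicSeq_pairs
    (he : ∀ a : ℕ →₀ ℝ, ‖a.sum fun k c => c • e k‖ = jamesNorm a) {k : ℕ → ℕ}
    (hk : StrictMono k) (hk1 : ∀ j, k j ≠ 1) :
    ¬ IsSchauderBasicSeq fun i => e (k (2 * i)) - e (k (2 * i + 1)) + (2 : ℝ) • e 1 := by
  rintro ⟨C, hC, hproj⟩
  set K := ⌈4 * C ^ 2⌉₊ + 1
  set α : ℕ → ℝ := fun i => if i < K then 1 else -1
  have hα : ∀ i, |α i| ≤ 1 := fun i => by simp only [α]; split_ifs <;> norm_num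
  have hsumK : ∑ i ∈ range K, α i = K := by
    rw [sum_congr rfl fun i hi => if_pos (mem_range.mp hi)]; simp
  have hα0 : ∑ i ∈ range (2 * K), α i = 0 := by
    simp [two_mul, sum_range_add, hsumK, α]
  have hlow := two_mul_abs_sum_le_norm_sum_smul_pairs he hk1 α K
  rw [hsumK, abs_of_nonneg K.cast_nonneg] at hlow
  have hup := norm_sum_smul_pairs_le he hk hα hα0
  rw [show 2 * ((2 * K : ℕ) : ℝ) = 2 ^ 2 * K by push_cast; ring, Real.sqrt_mul (by positivity),
    Real.sqrt_sq zero_le_two] at hup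
  have hgrowth : 2 * (K : ℝ) ≤ C * (2 * (2 * √K)) :=
    hlow.trans <| (hproj K (2 * K) (by omega) α).trans (mul_le_mul_of_nonneg_left hup hC.le)
  have hK : (K : ℝ) = √K ^ 2 := (Real.sq_sqrt K.cast_nonneg).symm
  have hKpos : 0 < √(K : ℝ) := Real.sqrt_pos.mpr (by positivity)
  have hKC : 4 * C ^ 2 < K := by
    have := Nat.le_ceil (4 * C ^ 2); push_cast [K]; linarith
  nlinarith

theorem exists_strictMono_apply_eq_add_neg_one_pow_smul
    (he : ∀ a : ℕ →₀ ℝ, ‖a.sum fun k c => c • e k‖ = jamesNorm a)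
    {M L : Set ℕ} (hM : M.Infinite) (hL : L.Infinite) {v : ℕ → X}
    (hrange : Set.range v =
      (fun n => e (2 * n) + e 1) '' M ∪ (fun n => e (2 * n + 1) - e 1) '' L) :
    ∃ k r : ℕ → ℕ, StrictMono k ∧ StrictMono r ∧
      ∀ n, 1 < k n ∧ v (r n) = e (k n) + (-1 : ℝ) ^ n • e 1 := by
  have he_inj := injective_of_norm_eq_jamesNorm he
  have hM' := exists_gt_apply_eq_of_image_subset_range hM
    ((add_left_injective (e 1)).comp (he_inj.comp (mul_right_injective₀ two_ne_zero)))
    (hrange ▸ Set.subset_union_left)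
  have hL' := exists_gt_apply_eq_of_image_subset_range hL
    ((sub_left_injective (b := e 1)).comp (he_inj.comp fun a b h => by omega))
    (hrange ▸ Set.subset_union_right)
  refine exists_strictMono_forall_of_exists_gt
    (R := fun n k j => 1 < k ∧ v j = e k + (-1 : ℝ) ^ n • e 1) fun n c p => ?_
  rcases n.even_or_odd with hn | hn
  · obtain ⟨m, j, hcm, hpj, hvj⟩ := hM' c p
    exact ⟨2 * m, j, by omega, hpj, by omega, by simp [hvj, hn.neg_one_pow]⟩
  · obtain ⟨l, j, hcl, hpj, hvj⟩ := hL' c p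
    exact ⟨2 * l + 1, j, by omega, hpj, by omega, by simp [hvj, hn.neg_one_pow, sub_eq_add_neg]⟩

end JamesBasis

theorem statement7_general {X : Type*} [NormedAddCommGroup X] [NormedSpace ℝ X]
    (e : ℕ → X) (he : ∀ a : ℕ →₀ ℝ, ‖a.sum fun k c => c • e k‖ = jamesNorm a)
    (M L : Set ℕ) (hM : M.Infinite) (hL : L.Infinite)
    (v : ℕ → X)
    (hrange : Set.range v =
      (fun n => e (2 * n) + e 1) '' M ∪ (fun n => e (2 * n + 1) - e 1) '' L) :
    ¬ IsSchauderBasicSeq v := by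
  intro hv
  obtain ⟨k, r, hk, hr, hkr⟩ := exists_strictMono_apply_eq_add_neg_one_pow_smul he hM hL hrange
  have hpairs : (fun i => (v ∘ r) (2 * i) - (v ∘ r) (2 * i + 1)) =
      fun i => e (k (2 * i)) - e (k (2 * i + 1)) + (2 : ℝ) • e 1 := by
    funext i
    simp only [Function.comp_apply, (hkr _).2, (even_two_mul i).neg_one_pow,
      (even_two_mul i).add_one.neg_one_pow]
    module
  exact not_isSchauderBasicSeq_pairs he hk (fun j => (hkr j).1.ne')
    (hpairs ▸ (hv.comp_strictMono hr).sub_pairs)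

/-- In the James space (here: a Banach space `X` with a sequence `(e n)`
whose finite linear combinations carry the James norm), setting
`e¹_n = e_{2n} + e_1` and `e²_n = e_{2n+1} - e_1`, for no pair of infinite subsets
`M, L ⊆ ℕ` is an enumeration `v` of `{e¹_n : n ∈ M} ∪ {e²_n : n ∈ L}` a Schauder
basic sequence. -/
theorem statement7 {X : Type*} [NormedAddCommGroup X] [NormedSpace ℝ X] [CompleteSpace X]
    (e : ℕ → X) (he : ∀ a : ℕ →₀ ℝ, ‖a.sum fun k c => c • e k‖ = jamesNorm a)
    (M L : Set ℕ) (hM : M.Infinite) (hL : L.Infinite)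
    (hM1 : ∀ n ∈ M, 1 ≤ n) (hL1 : ∀ n ∈ L, 1 ≤ n)
    (v : ℕ → X) (hv : Function.Injective v)
    (hrange : Set.range v =
      (fun n => e (2 * n) + e 1) '' M ∪ (fun n => e (2 * n + 1) - e 1) '' L) :
    ¬ IsSchauderBasicSeq v :=
  statement7_general e he M L hM hL v hrange
end

section
/- Let (x_n^1),...,(x_n^l) be bounded sequences in a Banach space X and (δ_n) a decreasing null sequence of positive reals. Then for every infinite M ⊂ ℕ there exists an infinite L ⊂ M such that for every k ∈ ℕ, all scalars (a_{ij}) in [−1,1]^{l×k}, and all strict plegma families (s_i)_{i=1}^l, (t_i)_{i=1}^l in [L]^k with s_1(1) ≥ L(k) and t_1(1) ≥ L(k), one has |‖Σ_{j=1}^k Σ_{i=1}^l a_{ij} x^i_{s_i(j)}‖ − ‖Σ_{j=1}^k Σ_{i=1}^l a_{ij} x^i_{t_i(j)}‖| < δ_k. -/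
open Filter

/-- A strict plegma family `(s i)_{i < l}` in `[ℕ]^k`. -/
def IsStrictPlegma (l k : ℕ) (s : Fin l → Fin k → ℕ) : Prop :=
  (∀ (i₁ i₂ : Fin l) (j₁ j₂ : Fin k), j₁ < j₂ → s i₁ j₁ < s i₂ j₂) ∧
  (∀ i₁ i₂ : Fin l, i₁ < i₂ → ∀ j : Fin k, s i₁ j < s i₂ j)

/-!
For fixed `k`, list a strict plegma family `(s_i)` in the lexicographic order of `(j, i)`: it
becomes an increasing `(l * k)`-tuple. Cover the coefficient cube `[-1,1]^{l×k}` by a finite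
`ρ`-net; colouring each tuple by the integer parts of `‖∑ a_{ij} x^i_{s_i(j)}‖ / ε` for the
finitely many net points `a` and applying the infinite Ramsey theorem gives an infinite set on
which all these norms vary by less than `ε`, and the norms are Lipschitz in `a` uniformly in `s`.
Doing this with `ε = δ_k` for every `k` inside a nested sequence of infinite sets and
diagonalising produces `L`.
-/

theorem Set.Infinite.sep_lt {S : Set ℕ} (hS : S.Infinite) (a : ℕ) : {b ∈ S | a < b}.Infinite :=
  (hS.sdiff (Set.finite_le_nat a)).mono fun _ hb => ⟨hb.1, not_le.mp hb.2⟩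

theorem exists_strictMono_fusion {R : ℕ → ℕ → Set ℕ → Prop} (hR : ∀ m a, Antitone (R m a))
    (step : ∀ m (S : Set ℕ), S.Infinite →
      ∃ a ∈ S, ∃ T ⊆ S, T.Infinite ∧ (∀ b ∈ T, a < b) ∧ R m a T)
    {M : Set ℕ} (hM : M.Infinite) :
    ∃ φ : ℕ → ℕ, StrictMono φ ∧ (∀ n, φ n ∈ M) ∧ ∀ m, R m (φ m) (φ '' Set.Ioi m) := by
  choose! a ha T hTS hT hlt hRT using step
  let S : ℕ → Set ℕ := fun m => Nat.rec M (fun m S => T m S) m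
  have hS : ∀ m, (S m).Infinite := fun m => by
    induction m with
    | zero => exact hM
    | succ m ih => exact hT m _ ih
  have hanti : Antitone S := antitone_nat_of_succ_le fun m => hTS m _ (hS m)
  refine ⟨fun m => a m (S m),
    strictMono_nat_of_lt_succ fun m => hlt m _ (hS m) _ (ha (m + 1) _ (hS (m + 1))),
    fun m => hanti (Nat.zero_le m) (ha m _ (hS m)), fun m => hR m _ ?_ (hRT m _ (hS m))⟩
  rintro _ ⟨n, hn, rfl⟩
  exact hanti (Nat.succ_le_of_lt hn) (ha n _ (hS n))

theorem exists_strictMono_diagonal {P : ℕ → Set ℕ → Prop} (hP : ∀ m, Antitone (P m))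
    (step : ∀ m (S : Set ℕ), S.Infinite → ∃ T ⊆ S, T.Infinite ∧ P m T)
    {M : Set ℕ} (hM : M.Infinite) :
    ∃ φ : ℕ → ℕ, StrictMono φ ∧ (∀ n, φ n ∈ M) ∧ ∀ m, P m (φ '' Set.Ici m) := by
  obtain ⟨φ, hφ, hφM, hφP⟩ := exists_strictMono_fusion (R := fun m a T => P m (insert a T))
    (fun m _ _ _ h => hP m (Set.insert_subset_insert h)) (fun m S hS => by
      obtain ⟨T, hTS, hT, hPT⟩ := step m S hS
      obtain ⟨a, ha⟩ := hT.nonempty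
      exact ⟨a, hTS ha, {b ∈ T | a < b}, fun b hb => hTS hb.1, hT.sep_lt a, fun b hb => hb.2,
        hP m (Set.insert_subset ha fun b hb => hb.1) hPT⟩) hM
  refine ⟨φ, hφ, hφM, fun m => ?_⟩
  rw [← Set.Ioi_insert, Set.image_insert_eq]
  exact hφP m

/-- The infinite Ramsey theorem, for `n`-element subsets of `ℕ` listed increasingly. -/
theorem exists_infinite_homogeneous {κ : Type*} [Finite κ] (n : ℕ) (c : (Fin n → ℕ) → κ)
    {S : Set ℕ} (hS : S.Infinite) :
    ∃ T ⊆ S, T.Infinite ∧ ∃ y, ∀ u, StrictMono u → (∀ i, u i ∈ T) → c u = y := by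
  induction n generalizing S with
  | zero => exact ⟨S, subset_rfl, hS, c Fin.elim0, fun u _ _ => congrArg c (funext (·.elim0))⟩
  | succ n ih =>
    obtain ⟨φ, hφ, hφS, hφc⟩ := exists_strictMono_fusion
      (R := fun _ a T => ∃ y, ∀ u, StrictMono u → (∀ i, u i ∈ T) → c (Fin.cons a u) = y)
      (fun _ _ _ _ h ⟨y, hy⟩ => ⟨y, fun u hu huT => hy u hu fun i => h (huT i)⟩)
      (fun _ S' hS' => by
        obtain ⟨a, ha⟩ := hS'.nonempty
        obtain ⟨T, hTS, hT, hTc⟩ := ih (fun u => c (Fin.cons a u)) (hS'.sep_lt a)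
        exact ⟨a, ha, T, fun b hb => (hTS hb).1, hT, fun b hb => (hTS hb).2, hTc⟩) hS
    choose col hcol using hφc
    obtain ⟨y, hy⟩ := Finite.exists_infinite_fiber col
    refine ⟨φ '' (col ⁻¹' {y}), by rintro _ ⟨m, -, rfl⟩; exact hφS m,
      (Set.infinite_coe_iff.mp hy).image hφ.injective.injOn, y, fun u hu huT => ?_⟩
    obtain ⟨m, hm, hm0⟩ := huT 0
    have htail : ∀ i, Fin.tail u i ∈ φ '' Set.Ioi m := fun i => by
      obtain ⟨m', -, hm'⟩ := huT i.succ
      refine ⟨m', hφ.lt_iff_lt.mp ?_, hm'⟩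
      rw [hm0, hm']
      exact hu (Fin.succ_pos i)
    rw [← Fin.cons_self_tail u, ← hm0, hcol m (Fin.tail u) (hu.comp Fin.strictMono_succ) htail]
    exact hm

theorem exists_infinite_homogeneous_of_fintype {α κ : Type*} [Fintype α] [LinearOrder α]
    [Finite κ] (c : (α → ℕ) → κ) {S : Set ℕ} (hS : S.Infinite) :
    ∃ T ⊆ S, T.Infinite ∧ ∃ y, ∀ u, StrictMono u → (∀ i, u i ∈ T) → c u = y := by
  let e := Fintype.orderIsoFinOfCardEq α rfl
  obtain ⟨T, hTS, hT, y, hy⟩ := exists_infinite_homogeneous _ (fun v => c (v ∘ e.symm)) hS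
  refine ⟨T, hTS, hT, y, fun u hu huT => ?_⟩
  simpa [Function.comp_def] using hy (u ∘ e) (hu.comp e.strictMono) fun i => huT _

theorem exists_infinite_forall_abs_sub_lt {α Q : Type*} [Fintype α] [LinearOrder α] [Finite Q]
    (f : Q → (α → ℕ) → ℝ) {B : ℝ} (hB : ∀ q u, |f q u| ≤ B) {ε : ℝ} (hε : 0 < ε)
    {S : Set ℕ} (hS : S.Infinite) :
    ∃ T ⊆ S, T.Infinite ∧ ∀ q u v, StrictMono u → StrictMono v → (∀ i, u i ∈ T) →
      (∀ i, v i ∈ T) → |f q u - f q v| < ε := by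
  let c : (α → ℕ) → Q → ℤ := fun u q => ⌊f q u / ε⌋
  have hc : (Set.range c).Finite := by
    refine (Set.Finite.pi fun _ => Set.finite_Icc ⌊-B / ε⌋ ⌊B / ε⌋).subset ?_
    rintro _ ⟨u, rfl⟩ q -
    obtain ⟨hl, hu⟩ := abs_le.mp (hB q u)
    exact ⟨Int.floor_mono (by gcongr), Int.floor_mono (by gcongr)⟩
  have := hc.to_subtype
  obtain ⟨T, hTS, hT, y, hy⟩ :=
    exists_infinite_homogeneous_of_fintype (Set.rangeFactorization c) hS
  refine ⟨T, hTS, hT, fun q u v hu hv huT hvT => ?_⟩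
  have hfloor : ⌊f q u / ε⌋ = ⌊f q v / ε⌋ :=
    congrFun (congrArg Subtype.val ((hy u hu huT).trans (hy v hv hvT).symm)) q
  have := Int.abs_sub_lt_one_of_floor_eq_floor hfloor
  rwa [← sub_div, abs_div, abs_of_pos hε, div_lt_one hε] at this

section Plegma

variable {X : Type*} [NormedAddCommGroup X] [NormedSpace ℝ X] {l k : ℕ}

theorem IsStrictPlegma.strictMono_lex {s : Fin l → Fin k → ℕ} (hs : IsStrictPlegma l k s) :
    StrictMono fun p : Fin k ×ₗ Fin l => s (ofLex p).2 (ofLex p).1 := by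
  rintro ⟨j₁, i₁⟩ ⟨j₂, i₂⟩ h
  obtain hj | ⟨rfl, hi⟩ := Prod.Lex.toLex_lt_toLex.mp h
  · exact hs.1 i₁ i₂ j₁ j₂ hj
  · exact hs.2 i₁ i₂ hi j₁

theorem IsStrictPlegma.zero_le {s : Fin l → Fin k → ℕ} (hs : IsStrictPlegma l k s)
    (hl : 0 < l) (hk : 0 < k) (i : Fin l) (j : Fin k) : s ⟨0, hl⟩ ⟨0, hk⟩ ≤ s i j :=
  hs.strictMono_lex.monotone (Prod.Lex.toLex_mono (show (⟨0, hk⟩, ⟨0, hl⟩) ≤ (j, i) from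
    ⟨Nat.zero_le _, Nat.zero_le _⟩))

theorem IsStrictPlegma.mem_image_Ici {s : Fin l → Fin k → ℕ} (hs : IsStrictPlegma l k s)
    (hl : 0 < l) (hk : 0 < k) {φ : ℕ → ℕ} (hφ : StrictMono φ) (hsφ : ∀ i j, s i j ∈ Set.range φ)
    {m : ℕ} (hm : φ m ≤ s ⟨0, hl⟩ ⟨0, hk⟩) (i : Fin l) (j : Fin k) : s i j ∈ φ '' Set.Ici m := by
  obtain ⟨n, hn⟩ := hsφ i j
  exact ⟨n, hφ.le_iff_le.mp (hn ▸ hm.trans (hs.zero_le hl hk i j)), hn⟩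

def plegmaSum (x : Fin l → ℕ → X) (a : Fin l → Fin k → ℝ) (s : Fin l → Fin k → ℕ) : X :=
  ∑ j, ∑ i, a i j • x i (s i j)

theorem plegmaSum_sub (x : Fin l → ℕ → X) (a b : Fin l → Fin k → ℝ) (s : Fin l → Fin k → ℕ) :
    plegmaSum x (a - b) s = plegmaSum x a s - plegmaSum x b s := by
  simp only [plegmaSum, Pi.sub_apply, sub_smul, Finset.sum_sub_distrib]

theorem norm_plegmaSum_le {x : Fin l → ℕ → X} {C : ℝ} (hC : ∀ i n, ‖x i n‖ ≤ C)
    (a : Fin l → Fin k → ℝ) (s : Fin l → Fin k → ℕ) :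
    ‖plegmaSum x a s‖ ≤ k * l * C * ‖a‖ := by
  have hterm : ∀ i j, ‖a i j • x i (s i j)‖ ≤ ‖a‖ * C := fun i j => by
    rw [norm_smul]
    exact mul_le_mul ((norm_le_pi_norm (a i) j).trans (norm_le_pi_norm a i)) (hC i _)
      (norm_nonneg _) (norm_nonneg _)
  calc ‖plegmaSum x a s‖ ≤ ∑ _j : Fin k, ∑ _i : Fin l, ‖a‖ * C :=
        norm_sum_le_of_le _ fun j _ => norm_sum_le_of_le _ fun i _ => hterm i j
    _ = k * l * C * ‖a‖ := by
        simp only [Finset.sum_const, Finset.card_univ, Fintype.card_fin, nsmul_eq_mul]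
        ring

theorem abs_norm_plegmaSum_sub_le {x : Fin l → ℕ → X} {C : ℝ} (hC : ∀ i n, ‖x i n‖ ≤ C)
    (a b : Fin l → Fin k → ℝ) (s : Fin l → Fin k → ℕ) :
    |‖plegmaSum x a s‖ - ‖plegmaSum x b s‖| ≤ k * l * C * ‖a - b‖ := by
  calc |‖plegmaSum x a s‖ - ‖plegmaSum x b s‖| ≤ ‖plegmaSum x a s - plegmaSum x b s‖ :=
        abs_norm_sub_norm_le _ _
    _ ≤ k * l * C * ‖a - b‖ := plegmaSum_sub x a b s ▸ norm_plegmaSum_le hC _ s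

def PlegmaNormStable (x : Fin l → ℕ → X) (k : ℕ) (ε : ℝ) (T : Set ℕ) : Prop :=
  ∀ a : Fin l → Fin k → ℝ, (∀ i j, |a i j| ≤ 1) → ∀ s t : Fin l → Fin k → ℕ,
    IsStrictPlegma l k s → IsStrictPlegma l k t → (∀ i j, s i j ∈ T) → (∀ i j, t i j ∈ T) →
      |‖plegmaSum x a s‖ - ‖plegmaSum x a t‖| < ε

theorem PlegmaNormStable.antitone (x : Fin l → ℕ → X) (k : ℕ) (ε : ℝ) :
    Antitone (PlegmaNormStable x k ε) :=
  fun _ _ hTT' hT' a ha s t hs ht hsT htT =>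
    hT' a ha s t hs ht (fun i j => hTT' (hsT i j)) (fun i j => hTT' (htT i j))

theorem exists_infinite_plegmaNormStable {x : Fin l → ℕ → X} {C : ℝ} (hC : ∀ i n, ‖x i n‖ ≤ C)
    (k : ℕ) {ε : ℝ} (hε : 0 < ε) {S : Set ℕ} (hS : S.Infinite) :
    ∃ T ⊆ S, T.Infinite ∧ PlegmaNormStable x k ε T := by
  have hC' : ∀ i n, ‖x i n‖ ≤ |C| := fun i n => (hC i n).trans (le_abs_self C)
  obtain ⟨ρ, hρ, hKρ⟩ := exists_pos_mul_lt (by positivity : 0 < ε / 3) (k * l * |C|)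
  obtain ⟨N, hN1, hNfin, hcover⟩ :=
    finite_cover_balls_of_compact (isCompact_closedBall (0 : Fin l → Fin k → ℝ) 1) hρ
  have := hNfin.to_subtype
  obtain ⟨T, hTS, hT, hTN⟩ := exists_infinite_forall_abs_sub_lt
    (fun (q : N) (u : Fin k ×ₗ Fin l → ℕ) => ‖plegmaSum x q.1 fun i j => u (toLex (j, i))‖)
    (fun q u => by
      rw [abs_norm]
      refine (norm_plegmaSum_le hC' _ _).trans (mul_le_of_le_one_right (by positivity) ?_)
      simpa using hN1 q.2)
    (by positivity : 0 < ε / 3) hS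
  refine ⟨T, hTS, hT, fun a ha s t hs ht hsT htT => ?_⟩
  obtain ⟨q, hqN, hq⟩ := Set.mem_iUnion₂.mp <|
    hcover (mem_closedBall_zero_iff.mpr (pi_norm_le_iff_of_nonneg zero_le_one |>.mpr fun i =>
      pi_norm_le_iff_of_nonneg zero_le_one |>.mpr fun j => ha i j))
  have happrox : ∀ s, |‖plegmaSum x a s‖ - ‖plegmaSum x q s‖| < ε / 3 := fun s =>
    (abs_norm_plegmaSum_sub_le hC' a q s).trans_lt <| (mul_le_mul_of_nonneg_left
      (mem_ball_iff_norm.mp hq).le (by positivity)).trans_lt hKρ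
  have hnet : |‖plegmaSum x q s‖ - ‖plegmaSum x q t‖| < ε / 3 :=
    hTN ⟨q, hqN⟩ (fun p => s (ofLex p).2 (ofLex p).1) (fun p => t (ofLex p).2 (ofLex p).1)
      hs.strictMono_lex ht.strictMono_lex (fun _ => hsT _ _) (fun _ => htT _ _)
  have hs' := abs_lt.mp (happrox s)
  have ht' := abs_lt.mp (happrox t)
  have hnet' := abs_lt.mp hnet
  exact abs_lt.mpr ⟨by linarith, by linarith⟩

end Plegma

theorem statement8_general {X : Type*} [NormedAddCommGroup X] [NormedSpace ℝ X]
    (l : ℕ) (hl : 0 < l) (x : Fin l → ℕ → X)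
    (hbdd : ∀ i : Fin l, ∃ C : ℝ, ∀ n, ‖x i n‖ ≤ C)
    (δ : ℕ → ℝ) (hδpos : ∀ n, 0 < δ n)
    (M : Set ℕ) (hM : M.Infinite) :
    ∃ φ : ℕ → ℕ, StrictMono φ ∧ (∀ n, φ n ∈ M) ∧
      ∀ (k : ℕ) (hk : 0 < k) (a : Fin l → Fin k → ℝ), (∀ i j, |a i j| ≤ 1) →
        ∀ s t : Fin l → Fin k → ℕ, IsStrictPlegma l k s → IsStrictPlegma l k t →
          (∀ i j, s i j ∈ Set.range φ) → (∀ i j, t i j ∈ Set.range φ) →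
          φ (k - 1) ≤ s ⟨0, hl⟩ ⟨0, hk⟩ → φ (k - 1) ≤ t ⟨0, hl⟩ ⟨0, hk⟩ →
          |‖∑ j, ∑ i, a i j • x i (s i j)‖ - ‖∑ j, ∑ i, a i j • x i (t i j)‖| < δ k := by
  choose C hC using hbdd
  obtain ⟨C', hC'⟩ := Finite.exists_le C
  obtain ⟨φ, hφ, hφM, hφstable⟩ := exists_strictMono_diagonal
    (P := fun m => PlegmaNormStable x (m + 1) (δ (m + 1))) (fun m => PlegmaNormStable.antitone ..)
    (fun m _ hS => exists_infinite_plegmaNormStable (fun i n => (hC i n).trans (hC' i)) _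
      (hδpos (m + 1)) hS) hM
  refine ⟨φ, hφ, hφM, fun k hk a ha s t hs ht hsφ htφ hs0 ht0 => ?_⟩
  obtain ⟨m, rfl⟩ := Nat.exists_eq_add_one.mpr hk
  exact hφstable m a ha s t hs ht (hs.mem_image_Ici hl hk hφ hsφ hs0)
    (ht.mem_image_Ici hl hk hφ htφ ht0)

/-- Given bounded sequences `(x i)_{i<l}` in a Banach space and a decreasing
null sequence `(δ n)` of positive reals, every infinite `M ⊆ ℕ` has an infinite subset
`L ⊆ M` (enumerated by a strictly increasing `φ`) such that for every `k`, all scalars in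
`[-1,1]` and all strict plegma families `s, t` in `[L]^k` with `s 1 1, t 1 1 ≥ L(k)`, the
norms of the corresponding combinations differ by less than `δ k`. -/
theorem statement8 {X : Type*} [NormedAddCommGroup X] [NormedSpace ℝ X] [CompleteSpace X]
    (l : ℕ) (hl : 0 < l) (x : Fin l → ℕ → X)
    (hbdd : ∀ i : Fin l, ∃ C : ℝ, ∀ n, ‖x i n‖ ≤ C)
    (δ : ℕ → ℝ) (hδpos : ∀ n, 0 < δ n) (hδanti : Antitone δ)
    (hδ0 : Tendsto δ atTop (nhds 0))
    (M : Set ℕ) (hM : M.Infinite) :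
    ∃ φ : ℕ → ℕ, StrictMono φ ∧ (∀ n, φ n ∈ M) ∧
      ∀ (k : ℕ) (hk : 0 < k) (a : Fin l → Fin k → ℝ), (∀ i j, |a i j| ≤ 1) →
        ∀ s t : Fin l → Fin k → ℕ, IsStrictPlegma l k s → IsStrictPlegma l k t →
          (∀ i j, s i j ∈ Set.range φ) → (∀ i j, t i j ∈ Set.range φ) →
          φ (k - 1) ≤ s ⟨0, hl⟩ ⟨0, hk⟩ → φ (k - 1) ≤ t ⟨0, hl⟩ ⟨0, hk⟩ →
          |‖∑ j, ∑ i, a i j • x i (s i j)‖ - ‖∑ j, ∑ i, a i j • x i (t i j)‖| < δ k :=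
  statement8_general l hl x hbdd δ hδpos M hM
end

section
/- Let X be a Banach space and T ∈ 𝓛(X) a compact operator. Then inf ‖T|_Y‖ = 0, where the infimum is taken over all closed subspaces Y of X of finite codimension. -/
/-- For a compact operator `T` on a Banach space `X`, the infimum of
`‖T|_Y‖` over all closed finite-codimensional subspaces `Y` of `X` is `0`: for every
`ε > 0` there is such a `Y` with `‖T y‖ ≤ ε ‖y‖` for all `y ∈ Y`. -/
theorem statement13 {X : Type*} [NormedAddCommGroup X] [NormedSpace ℝ X] [CompleteSpace X]
    (T : X →L[ℝ] X) (hT : IsCompactOperator T) :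
    ∀ ε > (0:ℝ), ∃ Y : Submodule ℝ X, IsClosed (Y : Set X) ∧
      FiniteDimensional ℝ (X ⧸ Y) ∧ ∀ y ∈ Y, ‖T y‖ ≤ ε * ‖y‖ := by
  intro ε hε
  have hK : IsCompact (closure ((T : X →ₗ[ℝ] X) '' Metric.closedBall 0 1)) :=
    IsCompactOperator.isCompact_closure_image_closedBall (𝕜₁ := ℝ) hT 1
  obtain ⟨t, hts, htf, hcov⟩ := hK.finite_cover_balls (half_pos hε)
  haveI : Fintype t := htf.fintype
  choose g hg1 hg2 using fun z : t => exists_dual_vector'' ℝ (z : X)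
  set φ : X →ₗ[ℝ] (t → ℝ) :=
    LinearMap.pi (fun z : t => (((g z).comp T) : X →ₗ[ℝ] ℝ)) with hφ
  refine ⟨LinearMap.ker φ, ?_, ?_, ?_⟩
  · have : (LinearMap.ker φ : Set X) = ⋂ z : t, ((g z).comp T) ⁻¹' {0} := by
      ext x
      simp [hφ, LinearMap.mem_ker, funext_iff, Set.mem_iInter]
    rw [this]
    exact isClosed_iInter fun z => isClosed_singleton.preimage ((g z).comp T).continuous
  · exact Module.Finite.equiv (LinearMap.quotKerEquivRange φ).symm
  · intro y hy
    rcases eq_or_ne y 0 with rfl | hy0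
    · simp
    have hyn : (0:ℝ) < ‖y‖ := norm_pos_iff.2 hy0
    set u : X := ‖y‖⁻¹ • y with hu
    have hun : ‖u‖ = 1 := by
      rw [hu, norm_smul, norm_inv, norm_norm, inv_mul_cancel₀ hyn.ne']
    have huY : u ∈ LinearMap.ker φ := Submodule.smul_mem _ _ hy
    have hTu : T u ∈ closure ((T : X →ₗ[ℝ] X) '' Metric.closedBall 0 1) :=
      subset_closure ⟨u, by simp [Metric.mem_closedBall, hun], rfl⟩
    obtain ⟨z, hz⟩ := Set.mem_iUnion.1 (hcov hTu)
    obtain ⟨hzt, hzb⟩ := Set.mem_iUnion.1 hz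
    have hzb' : ‖T u - z‖ < ε / 2 := by
      rw [← dist_eq_norm]; exact Metric.mem_ball.1 hzb
    have hg0 : g ⟨z, hzt⟩ (T u) = 0 := by
      have := LinearMap.mem_ker.1 huY
      have := congrFun this ⟨z, hzt⟩
      simpa [hφ] using this
    have hznorm : ‖z‖ ≤ ε / 2 := by
      have : ‖z‖ = g ⟨z, hzt⟩ (z - T u) := by
        rw [map_sub, hg0, sub_zero]
        exact_mod_cast (hg2 ⟨z, hzt⟩).symm
      calc ‖z‖ = g ⟨z, hzt⟩ (z - T u) := this
        _ ≤ ‖g ⟨z, hzt⟩ (z - T u)‖ := le_abs_self _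
        _ ≤ ‖g ⟨z, hzt⟩‖ * ‖z - T u‖ := (g ⟨z, hzt⟩).le_opNorm _
        _ ≤ 1 * ‖z - T u‖ := by gcongr; exact hg1 _
        _ ≤ ε / 2 := by rw [one_mul, norm_sub_rev]; exact hzb'.le
    have hTu' : ‖T u‖ ≤ ε := by
      calc ‖T u‖ ≤ ‖T u - z‖ + ‖z‖ := by
            simpa using norm_add_le (T u - z) z
        _ ≤ ε / 2 + ε / 2 := add_le_add hzb'.le hznorm
        _ = ε := by ring
    have : T y = ‖y‖ • T u := by
      rw [hu, map_smul, smul_smul, mul_inv_cancel₀ hyn.ne', one_smul]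
    rw [this, norm_smul, norm_norm, mul_comm]
    exact mul_le_mul_of_nonneg_right hTu' hyn.le
end

section
/- Let X be a Banach space with a shrinking finite-dimensional decomposition (X_n), and Y a finite-codimensional closed subspace of X. Then for every ε > 0 there exists a tail subspace Z = closed span of ⋃_{n>n₀} X_n such that the unit ball of Z is contained in B_Y + ε B_X. -/
/-!
The quotient map `q : X → X ⧸ Y` has finite-dimensional range, so it is a finite sum of rank-one
maps `f ⊗ v` with `f ∈ X*`; shrinking therefore gives `‖q - q ∘ Pₙ‖ → 0`. On `ker Pₙ` the quotient
norm `‖q z‖ = dist(z, Y)` is then small, and a point `y ∈ Y` with `‖z - y‖ ≤ η`, `z ∈ B_X`, is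
pulled into `B_Y` by the factor `(1 + η)⁻¹` at the cost of another `η`.
-/

open Filter Topology

theorem tendsto_comp_of_tendsto_strongDual_comp {𝕜 X F ι : Type*} [NontriviallyNormedField 𝕜]
    [CompleteSpace 𝕜] [NormedAddCommGroup X] [NormedSpace 𝕜 X] [NormedAddCommGroup F]
    [NormedSpace 𝕜 F] [FiniteDimensional 𝕜 F] {P : ι → X →L[𝕜] X} {l : Filter ι}
    (hP : ∀ f : StrongDual 𝕜 X, Tendsto (fun n => f ∘L P n) l (𝓝 f)) (T : X →L[𝕜] F) :
    Tendsto (fun n => T ∘L P n) l (𝓝 T) := by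
  let b := Module.finBasis 𝕜 F
  let c : Fin _ → StrongDual 𝕜 F := fun i => LinearMap.toContinuousLinearMap (b.coord i)
  have expand : ∀ S : X →L[𝕜] F, ∑ i, (c i ∘L S).smulRight (b i) = S := fun S => by
    ext x
    simp [c]
  have h : Tendsto (fun n => ∑ i, (c i ∘L T ∘L P n).smulRight (b i)) l
      (𝓝 (∑ i, (c i ∘L T).smulRight (b i))) :=
    tendsto_finsetSum _ fun i _ =>
      ((ContinuousLinearMap.smulRightL 𝕜 X F).flip (b i)).continuous.tendsto _ |>.comp
        (hP (c i ∘L T))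
  simpa only [expand] using h

theorem norm_sub_inv_one_add_smul_le {E : Type*} [SeminormedAddCommGroup E] [NormedSpace ℝ E]
    {z y : E} {η : ℝ} (hη : 0 ≤ η) (hz : ‖z‖ ≤ 1) (hzy : ‖z - y‖ ≤ η) :
    ‖(1 + η)⁻¹ • y‖ ≤ 1 ∧ ‖z - (1 + η)⁻¹ • y‖ ≤ 2 * η := by
  have hy : ‖y‖ ≤ 1 + η := (norm_le_norm_add_norm_sub' y z).trans (by rw [norm_sub_rev]; linarith)
  have hη1 : 0 < 1 + η := by linarith
  have hcoeff : (1 : ℝ) - (1 + η)⁻¹ = η * (1 + η)⁻¹ := by field_simp; ring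
  refine ⟨?_, ?_⟩
  · rw [norm_smul, Real.norm_of_nonneg (inv_nonneg.2 hη1.le)]
    exact inv_mul_le_one_of_le₀ hy hη1.le
  · calc ‖z - (1 + η)⁻¹ • y‖ = ‖(z - y) + (η * (1 + η)⁻¹) • y‖ := by
          rw [← hcoeff, sub_smul, one_smul]; abel_nf
      _ ≤ η + η * ((1 + η)⁻¹ * ‖y‖) := by
          grw [norm_add_le, norm_smul, hzy, Real.norm_of_nonneg (by positivity), mul_assoc]
      _ ≤ 2 * η := by grw [inv_mul_le_one_of_le₀ hy hη1.le]; linarith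

theorem Submodule.exists_mem_norm_le_one_norm_sub_le {E : Type*} [NormedAddCommGroup E]
    [NormedSpace ℝ E] (Y : Submodule ℝ E) {z : E} (hz : ‖z‖ ≤ 1) {η : ℝ}
    (hzY : ‖Y.mkQ z‖ < η) : ∃ y ∈ Y, ‖y‖ ≤ 1 ∧ ‖z - y‖ ≤ 2 * η := by
  obtain ⟨y, hyY, hzy⟩ : ∃ y ∈ (Y : Set E), dist z y < η :=
    (Metric.infDist_lt_iff ⟨0, Y.zero_mem⟩).1
      (QuotientAddGroup.norm_mk (S := Y.toAddSubgroup) z ▸ hzY)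
  obtain ⟨hy1, hzy'⟩ :=
    norm_sub_inv_one_add_smul_le ((norm_nonneg _).trans hzY.le) hz (dist_eq_norm z y ▸ hzy.le)
  exact ⟨_, Y.smul_mem _ hyY, hy1, hzy'⟩

theorem statement15_general {X : Type*} [NormedAddCommGroup X] [NormedSpace ℝ X]
    (P : ℕ → (X →L[ℝ] X))
    (hshrinking : ∀ f : X →L[ℝ] ℝ,
      Tendsto (fun n => ‖f - f.comp (P n)‖) atTop (nhds 0))
    (Y : Submodule ℝ X) (hYclosed : IsClosed (Y : Set X))
    (hYcodim : FiniteDimensional ℝ (X ⧸ Y))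
    (ε : ℝ) (hε : 0 < ε) :
    ∃ n₀ : ℕ, ∀ z ∈ LinearMap.ker (P n₀ : X →ₗ[ℝ] X), ‖z‖ ≤ 1 →
      ∃ y ∈ Y, ‖y‖ ≤ 1 ∧ ‖z - y‖ ≤ ε := by
  have hq : Tendsto (fun n => Y.mkQL ∘L P n) atTop (𝓝 Y.mkQL) :=
    tendsto_comp_of_tendsto_strongDual_comp (fun f => tendsto_iff_norm_sub_tendsto_zero.2 <| by
      simpa only [norm_sub_rev] using hshrinking f) Y.mkQL
  obtain ⟨n₀, hn₀⟩ := ((tendsto_iff_norm_sub_tendsto_zero (E := X →L[ℝ] X ⧸ Y)).1 hq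
    |>.eventually <| gt_mem_nhds (half_pos hε)).exists
  refine ⟨n₀, fun z hz hz1 => ?_⟩
  have hzY : ‖Y.mkQ z‖ < ε / 2 :=
    calc ‖Y.mkQ z‖ = ‖(Y.mkQL ∘L P n₀ - Y.mkQL) z‖ := by
          have hPz : P n₀ z = 0 := hz
          simp [hPz]
      _ ≤ ‖Y.mkQL ∘L P n₀ - Y.mkQL‖ :=
          (ContinuousLinearMap.le_opNorm _ _).trans (mul_le_of_le_one_right (norm_nonneg _) hz1)
      _ < ε / 2 := hn₀
  obtain ⟨y, hyY, hy1, hzy⟩ := Y.exists_mem_norm_le_one_norm_sub_le hz1 hzY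
  exact ⟨y, hyY, hy1, by linarith⟩

/-- Let `X` be a Banach space with a shrinking finite-dimensional
decomposition, encoded by its partial sum projections `P n` (finite rank, commuting as
`P n ∘ P m = P min`, converging pointwise to the identity, with adjoints converging in norm
on the dual), and let `Y` be a closed finite-codimensional subspace of `X`.  Then for every
`ε > 0` there is a tail subspace `Z = ker (P n₀)` (the closed span of the `X n`, `n > n₀`)
whose unit ball is contained in `B_Y + ε B_X`. -/
theorem statement15 {X : Type*} [NormedAddCommGroup X] [NormedSpace ℝ X] [CompleteSpace X]
    (P : ℕ → (X →L[ℝ] X))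
    (hrank : ∀ n, FiniteDimensional ℝ (LinearMap.range (P n : X →ₗ[ℝ] X)))
    (hcomm : ∀ m n : ℕ, m ≤ n → (P m).comp (P n) = P m ∧ (P n).comp (P m) = P m)
    (hconv : ∀ x : X, Tendsto (fun n => P n x) atTop (nhds x))
    (hshrinking : ∀ f : X →L[ℝ] ℝ,
      Tendsto (fun n => ‖f - f.comp (P n)‖) atTop (nhds 0))
    (Y : Submodule ℝ X) (hYclosed : IsClosed (Y : Set X))
    (hYcodim : FiniteDimensional ℝ (X ⧸ Y))
    (ε : ℝ) (hε : 0 < ε) :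
    ∃ n₀ : ℕ, ∀ z ∈ LinearMap.ker (P n₀ : X →ₗ[ℝ] X), ‖z‖ ≤ 1 →
      ∃ y ∈ Y, ‖y‖ ≤ 1 ∧ ‖z - y‖ ≤ ε :=
  statement15_general P hshrinking Y hYclosed hYcodim ε hε
end

section
/- Every Banach space X with the scalar-plus-compact property (every bounded operator on X is of the form λI + K with K compact) satisfies the Uniform Approximation on Large Subspaces property: there exists C > 0 such that for every convex compact W ⊂ 𝓛(X), every A ∈ 𝓛(X) and ε > 0 with the property that for every x in the unit ball of X there is B ∈ W with ‖A(x) − B(x)‖ ≤ ε, there exist a finite-codimensional closed subspace Y of X and B ∈ W with ‖(A − B)|_Y‖ ≤ Cε. -/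
/-!
A compact operator is small on some closed finite-codimensional subspace: the common kernel of
norming functionals for a finite net of the image of the unit ball. Do this at once for the
compact parts of the operators `A - c`, `c` in a finite `ε/3`-net of `W` inside `W`, to get one
subspace `Y`. At a unit vector `x ∈ Y` some `B ∈ W` is `ε`-close to `A`, so a net point `c` near
`B` has `‖(A - c) x‖ ≤ 4ε/3`. The compact part of `A - c` is small at `x`, so its scalar part is
at most `5ε/3`, and `A - c` has norm at most `2ε` on `Y`.
-/

open Metric

theorem IsCompactOperator.pi {M : Type*} [Zero M] [TopologicalSpace M] {ι : Type*} [Finite ι]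
    {N : ι → Type*} [∀ i, TopologicalSpace (N i)] {f : ∀ i, M → N i}
    (hf : ∀ i, IsCompactOperator (f i)) : IsCompactOperator fun x i => f i x := by
  choose K hK hpre using hf
  refine ⟨Set.univ.pi K, isCompact_univ_pi hK, ?_⟩
  convert Filter.iInter_mem.2 hpre using 1
  ext
  simp

section CompactOperator

variable {𝕜 X E : Type*} [RCLike 𝕜] [NormedAddCommGroup X] [NormedSpace 𝕜 X]
  [NormedAddCommGroup E] [NormedSpace 𝕜 E]

theorem IsCompactOperator.exists_isClosed_cofg_norm_le {K : X →L[𝕜] E}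
    (hK : IsCompactOperator K) {δ : ℝ} (hδ : 0 < δ) :
    ∃ Y : Submodule 𝕜 X, IsClosed (Y : Set X) ∧ Y.CoFG ∧ ∀ y ∈ Y, ‖K y‖ ≤ δ * ‖y‖ := by
  have hbdd : TotallyBounded (K '' closedBall 0 1) :=
    (hK.isCompact_closure_image_closedBall 1).totallyBounded.subset subset_closure
  obtain ⟨t, ht, hnet⟩ := totallyBounded_iff.1 hbdd (δ / 2) (half_pos hδ)
  have := ht.to_subtype
  choose g hg1 hgz using fun z : t => exists_dual_vector'' 𝕜 (z : E)
  let f : X →L[𝕜] (t → 𝕜) := ContinuousLinearMap.pi fun z => (g z).comp K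
  set Y := LinearMap.ker (f : X →ₗ[𝕜] t → 𝕜)
  refine ⟨Y, f.isClosed_ker, Submodule.CoFG.ker _, fun y hy => ?_⟩
  have hunit : ∀ u : Y, ‖u‖ = 1 → ‖K u‖ ≤ δ := by
    rintro ⟨u, hu⟩ hu1
    obtain ⟨z, hzt, hKu⟩ := Set.mem_iUnion₂.1 (hnet ⟨u, by simpa using hu1.le, rfl⟩)
    have hgKu : g ⟨z, hzt⟩ (K u) = 0 := congrFun (LinearMap.mem_ker.1 hu) ⟨z, hzt⟩
    have hz : ‖z‖ ≤ ‖K u - z‖ := by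
      simpa [hgz, hgKu] using
        ((g ⟨z, hzt⟩).le_opNorm (K u - z)).trans (mul_le_of_le_one_left (norm_nonneg _) (hg1 _))
    rw [mem_ball, dist_eq_norm] at hKu
    linarith [norm_le_norm_sub_add (K u) z]
  have hrestr : ‖K.comp Y.subtypeL‖ ≤ δ :=
    ContinuousLinearMap.opNorm_le_of_unit_norm hδ.le hunit
  simpa using (K.comp Y.subtypeL).le_of_opNorm_le hrestr ⟨y, hy⟩

theorem exists_isClosed_cofg_forall_norm_le {ι : Type*} [Finite ι] {K : ι → X →L[𝕜] E}
    (hK : ∀ i, IsCompactOperator (K i)) {δ : ℝ} (hδ : 0 < δ) :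
    ∃ Y : Submodule 𝕜 X, IsClosed (Y : Set X) ∧ Y.CoFG ∧ ∀ i, ∀ y ∈ Y, ‖K i y‖ ≤ δ * ‖y‖ := by
  have := Fintype.ofFinite ι
  have hKpi : IsCompactOperator (ContinuousLinearMap.pi K) := IsCompactOperator.pi hK
  obtain ⟨Y, hYclosed, hYcofg, hY⟩ := hKpi.exists_isClosed_cofg_norm_le hδ
  exact ⟨Y, hYclosed, hYcofg, fun i y hy => (norm_le_pi_norm (fun i => K i y) i).trans (hY y hy)⟩

end CompactOperator

theorem norm_smul_id_add_apply_le {𝕜 X : Type*} [RCLike 𝕜] [NormedAddCommGroup X]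
    [NormedSpace 𝕜 X] {c : 𝕜} {K : X →L[𝕜] X} {δ η : ℝ} {x y : X} (hx : ‖x‖ = 1)
    (hTx : ‖(c • ContinuousLinearMap.id 𝕜 X + K) x‖ ≤ η) (hKx : ‖K x‖ ≤ δ)
    (hKy : ‖K y‖ ≤ δ * ‖y‖) :
    ‖(c • ContinuousLinearMap.id 𝕜 X + K) y‖ ≤ (η + 2 * δ) * ‖y‖ := by
  change ‖c • x + K x‖ ≤ η at hTx
  have hc : ‖c‖ ≤ η + δ :=
    calc ‖c‖ = ‖(c • x + K x) - K x‖ := by rw [add_sub_cancel_right, norm_smul, hx, mul_one]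
      _ ≤ ‖c • x + K x‖ + ‖K x‖ := norm_sub_le _ _
      _ ≤ η + δ := add_le_add hTx hKx
  calc ‖(c • ContinuousLinearMap.id 𝕜 X + K) y‖ = ‖c • y + K y‖ := rfl
    _ ≤ ‖c‖ * ‖y‖ + δ * ‖y‖ := (norm_add_le _ _).trans (by rw [norm_smul]; gcongr)
    _ ≤ (η + 2 * δ) * ‖y‖ := by nlinarith [norm_nonneg y]

theorem statement16_general {X : Type*} [NormedAddCommGroup X] [NormedSpace ℝ X]
    (hspc : ∀ A : X →L[ℝ] X, ∃ (c : ℝ) (K : X →L[ℝ] X),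
      IsCompactOperator K ∧ A = c • ContinuousLinearMap.id ℝ X + K) :
    ∃ C > (0:ℝ), ∀ (W : Set (X →L[ℝ] X)), Convex ℝ W → IsCompact W →
      ∀ (A : X →L[ℝ] X), ∀ ε > (0:ℝ),
        (∀ x : X, ‖x‖ ≤ 1 → ∃ B ∈ W, ‖A x - B x‖ ≤ ε) →
        ∃ (Y : Submodule ℝ X), IsClosed (Y : Set X) ∧ FiniteDimensional ℝ (X ⧸ Y) ∧
          ∃ B ∈ W, ∀ y ∈ Y, ‖A y - B y‖ ≤ C * ε * ‖y‖ := by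
  choose lam K hK hdec using hspc
  refine ⟨2, two_pos, fun W _ hW A ε hε happ => ?_⟩
  have hε3 : 0 < ε / 3 := by positivity
  obtain ⟨t, htW, ht, hnet⟩ := finite_cover_balls_of_compact hW hε3
  have := ht.to_subtype
  obtain ⟨Y, hYclosed, hYcofg, hKY⟩ :=
    exists_isClosed_cofg_forall_norm_le (fun c : t => hK (A - c)) hε3
  refine ⟨Y, hYclosed, hYcofg, ?_⟩
  rcases eq_or_ne Y ⊥ with rfl | hY
  · obtain ⟨B, hB, -⟩ := happ 0 (by simp)
    exact ⟨B, hB, fun y hy => by simp [(Submodule.mem_bot ℝ).1 hy]⟩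
  have := Submodule.nontrivial_iff_ne_bot.2 hY
  obtain ⟨⟨x, hxY⟩, hx⟩ := exists_norm_eq Y zero_le_one
  rw [Submodule.coe_norm] at hx
  obtain ⟨B, hBW, hABx⟩ := happ x hx.le
  obtain ⟨c, hct, hBc⟩ := Set.mem_iUnion₂.1 (hnet hBW)
  rw [mem_ball, dist_eq_norm] at hBc
  have hAcx : ‖(A - c) x‖ ≤ ε + ε / 3 :=
    calc ‖(A - c) x‖ = ‖(A x - B x) + (B - c) x‖ := by simp
      _ ≤ ‖A x - B x‖ + ‖B - c‖ * ‖x‖ :=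
        (norm_add_le _ _).trans (by gcongr; exact (B - c).le_opNorm x)
      _ ≤ ε + ε / 3 := by rw [hx, mul_one]; linarith
  refine ⟨c, htW hct, fun y hy => ?_⟩
  rw [hdec (A - c)] at hAcx
  have hAcy := norm_smul_id_add_apply_le hx hAcx
    (by simpa [hx] using hKY ⟨c, hct⟩ x hxY) (hKY ⟨c, hct⟩ y hy)
  rw [← hdec (A - c)] at hAcy
  calc ‖A y - c y‖ = ‖(A - c) y‖ := rfl
    _ ≤ (ε + ε / 3 + 2 * (ε / 3)) * ‖y‖ := hAcy
    _ = 2 * ε * ‖y‖ := by ring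

/-- Every Banach space with the scalar-plus-compact property satisfies the
Uniform Approximation on Large Subspaces (UALS) property: there is `C > 0` such that
whenever a convex, (operator-norm) compact set `W ⊆ 𝓛(X)` `ε`-pointwise approximates an
operator `A` on the unit ball, there are a closed finite-codimensional subspace `Y` and
`B ∈ W` with `‖(A - B)|_Y‖ ≤ C ε`. -/
theorem statement16 {X : Type*} [NormedAddCommGroup X] [NormedSpace ℝ X] [CompleteSpace X]
    (hspc : ∀ A : X →L[ℝ] X, ∃ (c : ℝ) (K : X →L[ℝ] X),
      IsCompactOperator K ∧ A = c • ContinuousLinearMap.id ℝ X + K) :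
    ∃ C > (0:ℝ), ∀ (W : Set (X →L[ℝ] X)), Convex ℝ W → IsCompact W →
      ∀ (A : X →L[ℝ] X), ∀ ε > (0:ℝ),
        (∀ x : X, ‖x‖ ≤ 1 → ∃ B ∈ W, ‖A x - B x‖ ≤ ε) →
        ∃ (Y : Submodule ℝ X), IsClosed (Y : Set X) ∧ FiniteDimensional ℝ (X ⧸ Y) ∧
          ∃ B ∈ W, ∀ y ∈ Y, ‖A y - B y‖ ≤ C * ε * ‖y‖ :=
  statement16_general hspc
end

section
/- In ℓ₁ with unit vector basis (e_n), define A((x_n)) = (Σ_n x_{2n−1}) e₁ + (Σ_n x_{2n}) e₂, and for z ∈ span{e₁,e₂} with ‖z‖ ≤ 1 the operators B_z^+((x_n)) = (Σ_n x_n) z and B_z^-((x_n)) = (Σ_n x_{2n−1} − Σ_n x_{2n}) z; let W be the convex hull of all such B_z^±. Then: (a) for every x in the unit ball of ℓ₁ there exists B ∈ W with ‖A x − B x‖ = 0; (b) for every B ∈ W and every n₀ ∈ ℕ, ‖(A − B)|_{span{e_n : n ≥ n₀}}‖ ≥ 1/2. -/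
open scoped ENNReal

noncomputable section

instance : Fact ((1 : ℝ≥0∞) ≤ 1) := ⟨le_rfl⟩

/-- The unit vector basis of `ℓ₁`. -/
noncomputable def e1 (n : ℕ) : lp (fun _ : ℕ => ℝ) 1 := lp.single 1 n (1 : ℝ)

/-!
For `x ∈ ℓ₁` put `a = ∑ x_{2n}` and `b = ∑ x_{2n+1}`, so that `A x = a e1 0 + b e1 1`,
`B_z⁺ x = (a + b) z` and `B_z⁻ x = (a - b) z`. One of `a + b`, `a - b` has absolute value
`|a| + |b| = ‖A x‖`, and dividing `A x` by it gives a `z` of norm at most `1` with `B_z^± x = A x`.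

For (b), test against `y± = (e1 (2m) ± e1 (2m+1)) / 2` with `2m ≥ n₀`: both have norm `1` and
`‖A y±‖ = 1`, while every generator `B_z^±` sends one of them to `z` and the other to `0`. Hence
`‖B y₊‖ + ‖B y₋‖ ≤ 1` on the generators, and so on all of `W` since this condition is convex in `B`;
then `‖(A - B) y₊‖ + ‖(A - B) y₋‖ ≥ 1`.
-/

open scoped lp

lemma smul_e1 (c : ℝ) (k : ℕ) : c • e1 k = lp.single 1 k c := by
  rw [e1, ← lp.single_smul, smul_eq_mul, mul_one]

lemma e1_apply (i k : ℕ) : e1 i k = if k = i then 1 else 0 := by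
  rw [e1, lp.single_apply, Pi.single_apply]

lemma norm_smul_e1_add_smul_e1 {i j : ℕ} (hij : i ≠ j) (c d : ℝ) :
    ‖c • e1 i + d • e1 j‖ = |c| + |d| := by
  classical
  have h := lp.norm_sum_single (p := 1) (by norm_num)
    (fun k => if k = i then c else d) ({i, j} : Finset ℕ)
  simpa [Finset.sum_pair hij, if_neg hij.symm, smul_e1] using h

lemma smul_e1_add_smul_e1_mem_span_tail {n₀ i j : ℕ} (hi : n₀ ≤ i) (hj : n₀ ≤ j) (c d : ℝ) :
    c • e1 i + d • e1 j ∈ Submodule.span ℝ {v : ℓ¹(ℕ, ℝ) | ∃ n ≥ n₀, v = e1 n} :=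
  add_mem (Submodule.smul_mem _ _ (Submodule.subset_span ⟨i, hi, rfl⟩))
    (Submodule.smul_mem _ _ (Submodule.subset_span ⟨j, hj, rfl⟩))

lemma tsum_eq_tsum_even_add_tsum_odd (x : ℓ¹(ℕ, ℝ)) :
    ∑' n : ℕ, x n = ∑' n : ℕ, x (2 * n) + ∑' n : ℕ, x (2 * n + 1) := by
  have hx : Summable fun n => x n := (lp.memℓp x).summable_of_one
  exact (tsum_even_add_odd (hx.comp_injective fun _ _ h => by omega)
    (hx.comp_injective fun _ _ h => by omega)).symm

section Block

variable (m : ℕ) (c d : ℝ)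

lemma tsum_smul_e1_add_smul_e1_even :
    ∑' n : ℕ, (c • e1 (2 * m) + d • e1 (2 * m + 1) : ℓ¹(ℕ, ℝ)) (2 * n) = c := by
  have : ∀ n, (c • e1 (2 * m) + d • e1 (2 * m + 1) : ℓ¹(ℕ, ℝ)) (2 * n) = if n = m then c else 0 := by
    intro n
    simp only [lp.coeFn_add, lp.coeFn_smul, Pi.add_apply, Pi.smul_apply, e1_apply, smul_eq_mul]
    split_ifs <;> first | omega | simp
  simp_rw [this, tsum_ite_eq]

lemma tsum_smul_e1_add_smul_e1_odd :
    ∑' n : ℕ, (c • e1 (2 * m) + d • e1 (2 * m + 1) : ℓ¹(ℕ, ℝ)) (2 * n + 1) = d := by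
  have : ∀ n, (c • e1 (2 * m) + d • e1 (2 * m + 1) : ℓ¹(ℕ, ℝ)) (2 * n + 1) = if n = m then d else 0 := by
    intro n
    simp only [lp.coeFn_add, lp.coeFn_smul, Pi.add_apply, Pi.smul_apply, e1_apply, smul_eq_mul]
    split_ifs <;> first | omega | simp
  simp_rw [this, tsum_ite_eq]

lemma tsum_smul_e1_add_smul_e1 :
    ∑' n : ℕ, (c • e1 (2 * m) + d • e1 (2 * m + 1) : ℓ¹(ℕ, ℝ)) n = c + d := by
  rw [tsum_eq_tsum_even_add_tsum_odd, tsum_smul_e1_add_smul_e1_even, tsum_smul_e1_add_smul_e1_odd]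

end Block

lemma abs_add_eq_or_abs_sub_eq (a b : ℝ) : |a + b| = |a| + |b| ∨ |a - b| = |a| + |b| := by
  rcases le_total 0 a with ha | ha <;> rcases le_total 0 b with hb | hb
  · exact Or.inl (abs_add_eq_add_abs_iff a b |>.2 (Or.inl ⟨ha, hb⟩))
  · right; rw [abs_of_nonneg (by linarith), abs_of_nonneg ha, abs_of_nonpos hb]; ring
  · right; rw [abs_of_nonpos (by linarith), abs_of_nonpos ha, abs_of_nonneg hb]; ring
  · exact Or.inl (abs_add_eq_add_abs_iff a b |>.2 (Or.inr ⟨ha, hb⟩))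

lemma exists_norm_le_one_smul_eq {E : Type*} [NormedAddCommGroup E] [NormedSpace ℝ E]
    {p : Submodule ℝ E} {v : E} (hv : v ∈ p) {c : ℝ} (h : ‖v‖ ≤ |c|) :
    ∃ z ∈ p, ‖z‖ ≤ 1 ∧ c • z = v := by
  rcases eq_or_ne c 0 with rfl | hc
  · exact ⟨0, p.zero_mem, by simp, by simp [norm_le_zero_iff.mp (by simpa using h)]⟩
  refine ⟨c⁻¹ • v, p.smul_mem _ hv, ?_, smul_inv_smul₀ hc v⟩
  rw [norm_smul, Real.norm_eq_abs, abs_inv]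
  exact inv_mul_le_one_of_le₀ h (abs_nonneg c)

lemma convex_setOf_norm_apply_add_norm_apply_le {E F : Type*} [NormedAddCommGroup E]
    [NormedSpace ℝ E] [NormedAddCommGroup F] [NormedSpace ℝ F] (x y : E) (r : ℝ) :
    Convex ℝ {C : E →L[ℝ] F | ‖C x‖ + ‖C y‖ ≤ r} := by
  have hx := (convexOn_norm convex_univ).comp_linearMap
    (ContinuousLinearMap.apply ℝ F x).toLinearMap
  have hy := (convexOn_norm convex_univ).comp_linearMap
    (ContinuousLinearMap.apply ℝ F y).toLinearMap
  simpa using (hx.add hy).convex_le r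

lemma half_le_norm_sub_or_half_le_norm_sub {E : Type*} [SeminormedAddCommGroup E]
    {u₁ u₂ v₁ v₂ : E} (h₁ : ‖u₁‖ = 1) (h₂ : ‖u₂‖ = 1) (hv : ‖v₁‖ + ‖v₂‖ ≤ 1) :
    1 / 2 ≤ ‖u₁ - v₁‖ ∨ 1 / 2 ≤ ‖u₂ - v₂‖ := by
  by_contra! h
  linarith [norm_sub_norm_le u₁ v₁, norm_sub_norm_le u₂ v₂]

lemma norm_half_smul_e1_add_half_smul_e1 {i j : ℕ} (hij : i ≠ j) {s : ℝ} (hs : |s| = 1) :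
    ‖(1 / 2 : ℝ) • e1 i + (s / 2) • e1 j‖ = 1 := by
  rw [norm_smul_e1_add_smul_e1 hij, abs_div s, hs]
  norm_num

lemma exists_generator_apply_eq
    {A : ℓ¹(ℕ, ℝ) →L[ℝ] ℓ¹(ℕ, ℝ)}
    (hA : ∀ x : ℓ¹(ℕ, ℝ), A x = (∑' n : ℕ, x (2 * n)) • e1 0 + (∑' n : ℕ, x (2 * n + 1)) • e1 1)
    {Bp Bm : ℓ¹(ℕ, ℝ) → (ℓ¹(ℕ, ℝ) →L[ℝ] ℓ¹(ℕ, ℝ))}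
    (hBp : ∀ z x, Bp z x = (∑' n : ℕ, x n) • z)
    (hBm : ∀ z x, Bm z x = ((∑' n : ℕ, x (2 * n)) - ∑' n : ℕ, x (2 * n + 1)) • z)
    (x : ℓ¹(ℕ, ℝ)) :
    ∃ B ∈ Bp '' {z | z ∈ Submodule.span ℝ {e1 0, e1 1} ∧ ‖z‖ ≤ 1} ∪
        Bm '' {z | z ∈ Submodule.span ℝ {e1 0, e1 1} ∧ ‖z‖ ≤ 1}, B x = A x := by
  set a := ∑' n : ℕ, x (2 * n)
  set b := ∑' n : ℕ, x (2 * n + 1)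
  have hAx : A x ∈ Submodule.span ℝ {e1 0, e1 1} := hA x ▸ add_mem
    (Submodule.smul_mem _ _ (Submodule.subset_span (by simp)))
    (Submodule.smul_mem _ _ (Submodule.subset_span (by simp)))
  have hnorm : ‖A x‖ = |a| + |b| := by rw [hA]; exact norm_smul_e1_add_smul_e1 zero_ne_one a b
  rcases abs_add_eq_or_abs_sub_eq a b with h | h
  · obtain ⟨z, hz, hz1, hcz⟩ := exists_norm_le_one_smul_eq hAx (hnorm.trans h.symm).le
    exact ⟨Bp z, Or.inl ⟨z, ⟨hz, hz1⟩, rfl⟩, by rw [hBp, tsum_eq_tsum_even_add_tsum_odd, hcz]⟩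
  · obtain ⟨z, hz, hz1, hcz⟩ := exists_norm_le_one_smul_eq hAx (hnorm.trans h.symm).le
    exact ⟨Bm z, Or.inr ⟨z, ⟨hz, hz1⟩, rfl⟩, by rw [hBm, hcz]⟩

lemma norm_apply_add_norm_apply_le_one_of_mem_generators
    {Bp Bm : ℓ¹(ℕ, ℝ) → (ℓ¹(ℕ, ℝ) →L[ℝ] ℓ¹(ℕ, ℝ))}
    (hBp : ∀ z x, Bp z x = (∑' n : ℕ, x n) • z)
    (hBm : ∀ z x, Bm z x = ((∑' n : ℕ, x (2 * n)) - ∑' n : ℕ, x (2 * n + 1)) • z) (m : ℕ) :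
    Bp '' {z | z ∈ Submodule.span ℝ {e1 0, e1 1} ∧ ‖z‖ ≤ 1} ∪
        Bm '' {z | z ∈ Submodule.span ℝ {e1 0, e1 1} ∧ ‖z‖ ≤ 1} ⊆
      {C | ‖C ((1 / 2 : ℝ) • e1 (2 * m) + (1 / 2 : ℝ) • e1 (2 * m + 1))‖ +
        ‖C ((1 / 2 : ℝ) • e1 (2 * m) + (-1 / 2 : ℝ) • e1 (2 * m + 1))‖ ≤ 1} := by
  rintro _ (⟨z, ⟨-, hz⟩, rfl⟩ | ⟨z, ⟨-, hz⟩, rfl⟩)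
  · rw [Set.mem_ofPred_eq, hBp, hBp, tsum_smul_e1_add_smul_e1, tsum_smul_e1_add_smul_e1]
    norm_num [hz]
  · rw [Set.mem_ofPred_eq, hBm, hBm, tsum_smul_e1_add_smul_e1_even,
      tsum_smul_e1_add_smul_e1_odd, tsum_smul_e1_add_smul_e1_even, tsum_smul_e1_add_smul_e1_odd]
    norm_num [hz]

/-- In `ℓ₁`, with `A((xₙ)) = (∑ₙ x_{2n-1}) e₁ + (∑ₙ x_{2n}) e₂`, and, for
`z` in the unit ball of `span{e₁, e₂}`, `B_z⁺((xₙ)) = (∑ₙ xₙ) z` and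
`B_z⁻((xₙ)) = (∑ₙ x_{2n-1} - ∑ₙ x_{2n}) z`, let `W` be the convex hull of all the `B_z^±`.
Then (a) every `x` in the unit ball of `ℓ₁` satisfies `A x = B x` for some `B ∈ W`, while
(b) for every `B ∈ W` and every `n₀` the restriction of `A - B` to `span{eₙ : n ≥ n₀}` has
norm at least `1/2`. -/
theorem statement18
    (A : lp (fun _ : ℕ => ℝ) 1 →L[ℝ] lp (fun _ : ℕ => ℝ) 1)
    (hA : ∀ x : lp (fun _ : ℕ => ℝ) 1,
      A x = (∑' n : ℕ, x (2 * n)) • e1 0 + (∑' n : ℕ, x (2 * n + 1)) • e1 1)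
    (Bp Bm : lp (fun _ : ℕ => ℝ) 1 → (lp (fun _ : ℕ => ℝ) 1 →L[ℝ] lp (fun _ : ℕ => ℝ) 1))
    (hBp : ∀ z x, Bp z x = (∑' n : ℕ, x n) • z)
    (hBm : ∀ z x, Bm z x = ((∑' n : ℕ, x (2 * n)) - ∑' n : ℕ, x (2 * n + 1)) • z)
    (W : Set (lp (fun _ : ℕ => ℝ) 1 →L[ℝ] lp (fun _ : ℕ => ℝ) 1))
    (hW : W = convexHull ℝ
      (Bp '' {z | z ∈ Submodule.span ℝ {e1 0, e1 1} ∧ ‖z‖ ≤ 1} ∪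
       Bm '' {z | z ∈ Submodule.span ℝ {e1 0, e1 1} ∧ ‖z‖ ≤ 1})) :
    (∀ x : lp (fun _ : ℕ => ℝ) 1, ‖x‖ ≤ 1 → ∃ B ∈ W, ‖A x - B x‖ = 0) ∧
    (∀ B ∈ W, ∀ n₀ : ℕ,
      ∃ y ∈ Submodule.span ℝ {v : lp (fun _ : ℕ => ℝ) 1 | ∃ n ≥ n₀, v = e1 n},
        ‖y‖ ≤ 1 ∧ (1 : ℝ) / 2 ≤ ‖A y - B y‖) := by
  subst hW
  refine ⟨fun x _ => ?_, fun B hB n₀ => ?_⟩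
  · obtain ⟨B, hB, hBx⟩ := exists_generator_apply_eq hA hBp hBm x
    exact ⟨B, subset_convexHull ℝ _ hB, by rw [hBx, sub_self, norm_zero]⟩
  have hBy := convexHull_min (norm_apply_add_norm_apply_le_one_of_mem_generators hBp hBm n₀)
    (convex_setOf_norm_apply_add_norm_apply_le _ _ 1) hB
  have hy {s : ℝ} (hs : |s| = 1) :
      (1 / 2 : ℝ) • e1 (2 * n₀) + (s / 2) • e1 (2 * n₀ + 1) ∈
          Submodule.span ℝ {v : ℓ¹(ℕ, ℝ) | ∃ n ≥ n₀, v = e1 n} ∧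
        ‖(1 / 2 : ℝ) • e1 (2 * n₀) + (s / 2) • e1 (2 * n₀ + 1)‖ = 1 ∧
        ‖A ((1 / 2 : ℝ) • e1 (2 * n₀) + (s / 2) • e1 (2 * n₀ + 1))‖ = 1 := by
    refine ⟨smul_e1_add_smul_e1_mem_span_tail (by omega) (by omega) _ _,
      norm_half_smul_e1_add_half_smul_e1 (by omega) hs, ?_⟩
    rw [hA, tsum_smul_e1_add_smul_e1_even, tsum_smul_e1_add_smul_e1_odd]
    exact norm_half_smul_e1_add_half_smul_e1 zero_ne_one hs
  obtain ⟨hmem₁, hnorm₁, hA₁⟩ := hy (s := 1) (by norm_num)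
  obtain ⟨hmem₂, hnorm₂, hA₂⟩ := hy (s := -1) (by norm_num)
  rcases half_le_norm_sub_or_half_le_norm_sub hA₁ hA₂ hBy with h | h
  exacts [⟨_, hmem₁, hnorm₁.le, h⟩, ⟨_, hmem₂, hnorm₂.le, h⟩]

end
end

section
/- Let X be a Banach space with dim X ≥ 2. Then there exist C > 0 and a convex compact subset W of 𝓛(X) such that for every x in the unit ball of X there is B ∈ W with ‖x − B(x)‖ = 0, while ‖I − B‖ ≥ C for all B ∈ W, where I is the identity operator. -/
/-!
Embed `ℝ²` into `X` by a map `E` with a continuous left inverse `F` (Hahn–Banach), and let a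
`2 × 2` matrix `b` act on `X` as `E ∘ b ∘ F`. Take `W = {I - E ∘ b ∘ F}` with `b` ranging over the
compact convex set of matrices of trace one and entries in `[-1, 1]`. A point `x` is fixed by
`I - E ∘ b ∘ F` as soon as `b` kills `F x`, which a trace-one projection can always do in dimension
two. Conversely `F ∘ (I - B) ∘ E = b` has trace one, which bounds `‖I - B‖` from below by
`1 / (2 ‖F‖ ‖E‖)`.
-/

open Function Matrix

lemma ContinuousLinearMap.HasLeftInverse.of_injective_of_finiteDimensional_domain
    {𝕜 E F : Type*} [RCLike 𝕜] [NormedAddCommGroup E] [NormedSpace 𝕜 E] [FiniteDimensional 𝕜 E]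
    [NormedAddCommGroup F] [NormedSpace 𝕜 F] {f : E →L[𝕜] F} (hf : Injective f) :
    f.HasLeftInverse := by
  let g : (f : E →ₗ[𝕜] F).range →L[𝕜] E :=
    LinearMap.toContinuousLinearMap (LinearEquiv.ofInjective (f : E →ₗ[𝕜] F) hf).symm.toLinearMap
  obtain ⟨G, hG⟩ := g.exist_extension_of_finiteDimensional_range
  refine ⟨G, fun x => ?_⟩
  calc G (f x) = g ⟨f x, x, rfl⟩ := by rw [hG]; rfl
    _ = x := (LinearEquiv.ofInjective _ hf).symm_apply_apply x

lemma exists_comp_eq_id_of_le_rank {X : Type*} [NormedAddCommGroup X] [NormedSpace ℝ X] {n : ℕ}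
    (h : n ≤ Module.rank ℝ X) :
    ∃ (E : (Fin n → ℝ) →L[ℝ] X) (F : X →L[ℝ] (Fin n → ℝ)), F ∘L E = .id ℝ _ := by
  obtain ⟨E, hE⟩ := Module.le_rank_iff_exists_linearMap.1 h
  obtain ⟨F, hF⟩ := ContinuousLinearMap.HasLeftInverse.of_injective_of_finiteDimensional_domain
    (f := LinearMap.toContinuousLinearMap E) hE
  exact ⟨_, F, ContinuousLinearMap.ext hF⟩

lemma div_mem_Icc_of_abs_le {x q : ℝ} (hq : 0 < q) (hx : |x| ≤ q) : x / q ∈ Set.Icc (-1) 1 := by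
  rw [Set.mem_Icc, le_div_iff₀ hq, div_le_iff₀ hq]
  constructor <;> linarith [abs_le.1 hx]

def traceOneBox (ι : Type*) [Fintype ι] : Set (Matrix ι ι ℝ) :=
  {b | b.trace = 1} ∩ Set.univ.pi fun _ => Set.univ.pi fun _ => Set.Icc (-1) 1

section traceOneBox

variable {ι : Type*} [Fintype ι]

lemma convex_traceOneBox : Convex ℝ (traceOneBox ι) :=
  (convex_hyperplane (traceLinearMap ι ℝ ℝ).isLinear 1).inter <|
    convex_pi fun _ _ => convex_pi fun _ _ => convex_Icc _ _

lemma isCompact_traceOneBox : IsCompact (traceOneBox ι) :=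
  (isCompact_univ_pi fun _ => isCompact_univ_pi fun _ => isCompact_Icc).of_isClosed_subset
    ((isClosed_eq (by fun_prop) continuous_const).inter
      (isClosed_set_pi fun _ _ => isClosed_set_pi fun _ _ => isClosed_Icc))
    Set.inter_subset_right

end traceOneBox

/-- For `c ≠ 0` the witness is the orthogonal projection onto the line orthogonal to `c`. -/
lemma exists_mem_traceOneBox_mulVec_eq_zero (c : Fin 2 → ℝ) :
    ∃ b ∈ traceOneBox (Fin 2), b *ᵥ c = 0 := by
  by_cases hc : c = 0
  · refine ⟨!![1, 0; 0, 0], ⟨by simp [trace_fin_two], ?_⟩, by simp [hc]⟩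
    intro i _ j _
    fin_cases i <;> fin_cases j <;> norm_num
  set q := c 0 ^ 2 + c 1 ^ 2
  have hq : 0 < q := by
    obtain h | h : c 0 ≠ 0 ∨ c 1 ≠ 0 := by
      by_contra! h
      exact hc (by ext i; fin_cases i <;> simp [h])
    all_goals positivity
  refine ⟨!![c 1 ^ 2 / q, -(c 0 * c 1) / q; -(c 0 * c 1) / q, c 0 ^ 2 / q], ⟨?_, ?_⟩, ?_⟩
  · show trace _ = 1
    rw [trace_fin_two_of, ← add_div, add_comm, div_self hq.ne']
  · intro i _ j _
    fin_cases i <;> fin_cases j <;> apply div_mem_Icc_of_abs_le hq <;>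
      simp only [abs_neg, abs_mul, abs_pow, sq_abs] <;>
      nlinarith [sq_nonneg (|c 0| - |c 1|), sq_abs (c 0), sq_abs (c 1)]
  · rw [mulVec_fin_two]
    ext i
    fin_cases i <;> simp only [of_apply, cons_val', cons_val_zero, cons_val_one, cons_val_fin_one,
      Fin.zero_eta, Fin.mk_one, Pi.zero_apply] <;> ring

section matrixSandwich

variable {ι X : Type*} [Fintype ι] [NormedAddCommGroup X] [NormedSpace ℝ X]
  (E : (ι → ℝ) →L[ℝ] X) (F : X →L[ℝ] (ι → ℝ))

noncomputable def matrixSandwich : Matrix ι ι ℝ →ₗ[ℝ] X →L[ℝ] X where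
  toFun b := E ∘L LinearMap.toContinuousLinearMap b.mulVecLin ∘L F
  map_add' b b' := by ext; simp
  map_smul' r b := by ext; simp

@[simp]
lemma matrixSandwich_apply (b : Matrix ι ι ℝ) (x : X) : matrixSandwich E F b x = E (b *ᵥ F x) :=
  rfl

lemma abs_trace_le_card_mul_norm (b : Matrix ι ι ℝ) :
    |b.trace| ≤ Fintype.card ι * ‖LinearMap.toContinuousLinearMap b.mulVecLin‖ := by
  classical
  calc |b.trace| ≤ ∑ i, |b i i| := Finset.abs_sum_le_sum_abs _ _
    _ ≤ ∑ _i : ι, ‖LinearMap.toContinuousLinearMap b.mulVecLin‖ := by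
      refine Finset.sum_le_sum fun i _ => ?_
      calc |b i i| = ‖(b *ᵥ Pi.single i (1 : ℝ)) i‖ := by simp [Real.norm_eq_abs]
        _ ≤ ‖b *ᵥ Pi.single i 1‖ := norm_le_pi_norm _ i
        _ ≤ ‖LinearMap.toContinuousLinearMap b.mulVecLin‖ * ‖(Pi.single i 1 : ι → ℝ)‖ :=
          (LinearMap.toContinuousLinearMap b.mulVecLin).le_opNorm _
        _ = _ := by rw [Pi.norm_single, norm_one, mul_one]
    _ = _ := by simp

variable {E F}

lemma abs_trace_le_mul_norm_matrixSandwich (hFE : F ∘L E = .id ℝ _) (b : Matrix ι ι ℝ) :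
    |b.trace| ≤ Fintype.card ι * ‖F‖ * ‖E‖ * ‖matrixSandwich E F b‖ := by
  have hFE' (c : ι → ℝ) : F (E c) = c := congr($hFE c)
  have hcomp : F ∘L matrixSandwich E F b ∘L E = LinearMap.toContinuousLinearMap b.mulVecLin := by
    ext1 c
    simp [hFE']
  calc |b.trace| ≤ Fintype.card ι * ‖F ∘L matrixSandwich E F b ∘L E‖ := by
        rw [hcomp]; exact abs_trace_le_card_mul_norm b
    _ ≤ Fintype.card ι * (‖F‖ * (‖matrixSandwich E F b‖ * ‖E‖)) := by
        gcongr
        exact (F.opNorm_comp_le _).trans (by gcongr; exact ContinuousLinearMap.opNorm_comp_le _ _)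
    _ = _ := by ring

end matrixSandwich

theorem statement19_general {X : Type*} [NormedAddCommGroup X] [NormedSpace ℝ X]
    (hdim : 2 ≤ Module.rank ℝ X) :
    ∃ C > (0:ℝ), ∃ W : Set (X →L[ℝ] X), Convex ℝ W ∧ IsCompact W ∧
      (∀ x : X, ‖x‖ ≤ 1 → ∃ B ∈ W, ‖x - B x‖ = 0) ∧
      ∀ B ∈ W, C ≤ ‖ContinuousLinearMap.id ℝ X - B‖ := by
  obtain ⟨E, F, hFE⟩ := exists_comp_eq_id_of_le_rank hdim
  have hE : E ≠ 0 := by rintro rfl; exact zero_ne_one (F.comp_zero.symm.trans hFE)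
  have hF : F ≠ 0 := by rintro rfl; exact zero_ne_one (E.zero_comp.symm.trans hFE)
  let A : Matrix (Fin 2) (Fin 2) ℝ →ᵃ[ℝ] X →L[ℝ] X :=
    AffineMap.const ℝ _ (.id ℝ X) - (matrixSandwich E F).toAffineMap
  refine ⟨(2 * ‖F‖ * ‖E‖)⁻¹, by positivity, A '' traceOneBox (Fin 2),
    convex_traceOneBox.affine_image A,
    isCompact_traceOneBox.image
      (continuous_const.sub (matrixSandwich E F).continuous_of_finiteDimensional), fun x _ => ?_, ?_⟩
  · obtain ⟨b, hb, hbx⟩ := exists_mem_traceOneBox_mulVec_eq_zero (F x)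
    exact ⟨A b, Set.mem_image_of_mem A hb, by simp [A, hbx]⟩
  · rintro _ ⟨b, hb, rfl⟩
    have hbound := abs_trace_le_mul_norm_matrixSandwich hFE b
    rw [hb.1, abs_one, Fintype.card_fin, Nat.cast_two] at hbound
    have hA : ContinuousLinearMap.id ℝ X - A b = matrixSandwich E F b := by simp [A]
    rwa [hA, inv_le_iff_one_le_mul₀' (by positivity)]

/-- If `X` is a Banach space with `dim X ≥ 2`, then there exist `C > 0` and a
convex, (operator-norm) compact set `W ⊆ 𝓛(X)` such that every `x` in the unit ball of `X`
satisfies `‖x - B x‖ = 0` for some `B ∈ W`, while `‖I - B‖ ≥ C` for all `B ∈ W`. -/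
theorem statement19 {X : Type*} [NormedAddCommGroup X] [NormedSpace ℝ X] [CompleteSpace X]
    (hdim : 2 ≤ Module.rank ℝ X) :
    ∃ C > (0:ℝ), ∃ W : Set (X →L[ℝ] X), Convex ℝ W ∧ IsCompact W ∧
      (∀ x : X, ‖x‖ ≤ 1 → ∃ B ∈ W, ‖x - B x‖ = 0) ∧
      ∀ B ∈ W, C ≤ ‖ContinuousLinearMap.id ℝ X - B‖ :=
  statement19_general hdim
end
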